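/- arXiv:2508.06161 — 8 statements merged into one kernel-verified Lean document; each statement's English description precedes it below -/
import Mathlib

section
/- Let K be a linearly ordered field and O a valuation ring of K that is convex with respect to the ordering (if 0 ≤ x ≤ y and y ∈ O then x ∈ O). Let m be the maximal ideal of O, let R := O/m be the residue field ordered by declaring the image of O^{≥0} to be the set of nonnegative elements, and let Γ_K := K×/O× be the value group, ordered so that v(a) ≥ 0 iff a ∈ O for the natural map v : K× → Γ_K. Then K is short if and only if both the ordered field R and the ordered abelian group Γ_K are short. -/
/-- A (pre)ordered set is *short* if every subset of it has countable cofinality and countable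
coinitiality, i.e. admits a countable cofinal subset and a countable coinitial subset. -/
def IsShort (α : Type*) [Preorder α] : Prop :=
  ∀ A : Set α,
    (∃ B ⊆ A, B.Countable ∧ ∀ x ∈ A, ∃ y ∈ B, x ≤ y) ∧
    (∃ B ⊆ A, B.Countable ∧ ∀ x ∈ A, ∃ y ∈ B, y ≤ x)

open Cardinal

abbrev Wo : Type := (Cardinal.aleph 1).ord.ToType

instance : IsWellOrder Wo (· < ·) := isWellOrder_lt

lemma Wo.countable_Iio (w : Wo) : (Set.Iio w).Countable := by
  rw [Cardinal.countable_iff_lt_aleph_one]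
  exact Cardinal.mk_Iio_toType_ord_lt w

lemma Wo.bounded {C : Set Wo} (hC : C.Countable) : ∃ b : Wo, ∀ c ∈ C, c < b := by
  have h1 : #C < Order.cof Wo := by
    rw [Ordinal.cof_toType, Cardinal.isRegular_aleph_one.cof_ord]
    exact (Cardinal.countable_iff_lt_aleph_one C).mp hC
  by_contra hne
  push_neg at hne
  exact absurd (Order.cof_le (s := C) hne) (not_le.2 h1)

instance : Nonempty Wo := by
  apply Cardinal.mk_ne_zero_iff.mp
  rw [Cardinal.mk_ord_toType]
  exact ne_of_gt (lt_of_lt_of_le Cardinal.aleph0_pos (Cardinal.aleph0_le_aleph 1))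

lemma Wo.rec_chain {α : Type*} (T : Set α) (lt' : α → α → Prop)
    (H : ∀ C : Set α, C ⊆ T → C.Countable → ∃ a ∈ T, ∀ c ∈ C, lt' c a) :
    ∃ f : Wo → α, (∀ w, f w ∈ T) ∧ ∀ ⦃w w' : Wo⦄, w < w' → lt' (f w) (f w') := by
  have key : ∀ (w : Wo) (ih : ∀ y, y < w → T), ∃ a : T, ∀ y (h : y < w), lt' (ih y h : α) a := by
    intro w ih
    obtain ⟨a, haT, ha⟩ := H {x | ∃ y, ∃ h : y < w, (ih y h : α) = x}
      (by rintro x ⟨y, h, rfl⟩; exact (ih y h).2)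
      (by
        have : {x | ∃ y, ∃ h : y < w, (ih y h : α) = x} =
            Set.range (fun p : Set.Iio w => (ih p.1 p.2 : α)) := by
          ext x
          constructor
          · rintro ⟨y, h, rfl⟩; exact ⟨⟨y, h⟩, rfl⟩
          · rintro ⟨⟨y, h⟩, rfl⟩; exact ⟨y, h, rfl⟩
        rw [this]
        haveI : Countable (Set.Iio w) := (Wo.countable_Iio w).to_subtype
        exact Set.countable_range _)
    exact ⟨⟨a, haT⟩, fun y h => ha _ ⟨y, h, rfl⟩⟩
  let f : Wo → T := (wellFounded_lt (α := Wo)).fix (fun w ih => (key w ih).choose)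
  have hfix : ∀ w, f w = (key w (fun y _ => f y)).choose :=
    fun w => WellFounded.fix_eq _ _ _
  refine ⟨fun w => (f w : α), fun w => (f w).2, fun w w' h => ?_⟩
  show lt' (f w : α) (f w' : α)
  rw [hfix w']
  exact (key w' (fun y _ => f y)).choose_spec w h

lemma not_isShort_of_strictMono {α : Type*} [LinearOrder α] {f : Wo → α}
    (hf : StrictMono f) : ¬ IsShort α := by
  intro h
  obtain ⟨B, hBA, hBc, hBcof⟩ := (h (Set.range f)).1
  obtain ⟨b, hb⟩ := Wo.bounded (hBc.preimage hf.injective)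
  obtain ⟨y, hyB, hy⟩ := hBcof (f b) (Set.mem_range_self b)
  obtain ⟨w, rfl⟩ := hBA hyB
  exact absurd hy (not_le.2 (hf (hb w hyB)))

lemma not_isShort_of_strictAnti {α : Type*} [LinearOrder α] {f : Wo → α}
    (hf : StrictAnti f) : ¬ IsShort α := by
  intro h
  obtain ⟨B, hBA, hBc, hBco⟩ := (h (Set.range f)).2
  obtain ⟨b, hb⟩ := Wo.bounded (hBc.preimage hf.injective)
  obtain ⟨y, hyB, hy⟩ := hBco (f b) (Set.mem_range_self b)
  obtain ⟨w, rfl⟩ := hBA hyB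
  exact absurd hy (not_le.2 (hf (hb w hyB)))

lemma isShort_of_no_chains {α : Type*} [LinearOrder α]
    (h1 : ∀ f : Wo → α, ¬ StrictMono f) (h2 : ∀ f : Wo → α, ¬ StrictAnti f) : IsShort α := by
  intro A
  constructor
  · by_contra h
    push_neg at h
    obtain ⟨f, -, hf⟩ := Wo.rec_chain A (· < ·) (by
      intro C hCA hCc
      obtain ⟨x, hxA, hx⟩ := h C hCA hCc
      exact ⟨x, hxA, hx⟩)
    exact h1 f (fun w w' hw => hf hw)
  · by_contra h
    push_neg at h
    obtain ⟨f, -, hf⟩ := Wo.rec_chain A (fun c a => a < c) (by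
      intro C hCA hCc
      obtain ⟨x, hxA, hx⟩ := h C hCA hCc
      exact ⟨x, hxA, hx⟩)
    exact h2 f (fun w w' hw => hf hw)

lemma exists_gt_Wo (w : Wo) : ∃ w' : Wo, w < w' := by
  obtain ⟨b, hb⟩ := Wo.bounded (Set.countable_singleton w)
  exact ⟨b, hb w rfl⟩

lemma eventually_constant_of_antitone {α : Type*} [LinearOrder α] (hα : IsShort α)
    (F : Wo → α) (w₀ : Wo) (hF : ∀ ⦃a b : Wo⦄, w₀ ≤ a → a ≤ b → F b ≤ F a) :
    ∃ w₁, w₀ ≤ w₁ ∧ ∀ w, w₁ ≤ w → F w = F w₁ := by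
  by_contra h
  push_neg at h
  have step : ∀ b : Wo, w₀ ≤ b → ∃ w, b < w ∧ F w < F b := by
    intro b hb
    obtain ⟨w, hw, hne⟩ := h b hb
    have hlt : F w < F b := (hF hb hw).lt_of_ne hne
    exact ⟨w, lt_of_le_of_ne hw (by rintro rfl; exact hne rfl), hlt⟩
  obtain ⟨f, hfT, hf⟩ := Wo.rec_chain (Set.Ici w₀) (fun c a => c < a ∧ F a < F c) (by
    intro C hCT hCc
    obtain ⟨b₀, hb₀⟩ := Wo.bounded hCc
    obtain ⟨w, hw, hFw⟩ := step (max b₀ w₀) (le_max_right _ _)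
    refine ⟨w, le_of_lt (lt_of_le_of_lt (le_max_right _ _) hw), fun c hc => ?_⟩
    refine ⟨lt_of_lt_of_le (hb₀ c hc) (le_trans (le_max_left _ _) hw.le), ?_⟩
    exact lt_of_lt_of_le hFw (hF (hCT hc) (le_trans (hb₀ c hc).le (le_max_left _ _))))
  exact not_isShort_of_strictAnti (f := F ∘ f) (fun w w' hw => (hf hw).2) hα

lemma eventually_constant_of_monotone {α : Type*} [LinearOrder α] (hα : IsShort α)
    (F : Wo → α) (w₀ : Wo) (hF : ∀ ⦃a b : Wo⦄, w₀ ≤ a → a ≤ b → F a ≤ F b) :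
    ∃ w₁, w₀ ≤ w₁ ∧ ∀ w, w₁ ≤ w → F w = F w₁ := by
  by_contra h
  push_neg at h
  have step : ∀ b : Wo, w₀ ≤ b → ∃ w, b < w ∧ F b < F w := by
    intro b hb
    obtain ⟨w, hw, hne⟩ := h b hb
    have hlt : F b < F w := (hF hb hw).lt_of_ne (fun he => hne he.symm)
    exact ⟨w, lt_of_le_of_ne hw (by rintro rfl; exact hne rfl), hlt⟩
  obtain ⟨f, hfT, hf⟩ := Wo.rec_chain (Set.Ici w₀) (fun c a => c < a ∧ F c < F a) (by
    intro C hCT hCc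
    obtain ⟨b₀, hb₀⟩ := Wo.bounded hCc
    obtain ⟨w, hw, hFw⟩ := step (max b₀ w₀) (le_max_right _ _)
    refine ⟨w, le_of_lt (lt_of_le_of_lt (le_max_right _ _) hw), fun c hc => ?_⟩
    refine ⟨lt_of_lt_of_le (hb₀ c hc) (le_trans (le_max_left _ _) hw.le), ?_⟩
    exact lt_of_le_of_lt (hF (hCT hc) (le_trans (hb₀ c hc).le (le_max_left _ _))) hFw)
  exact not_isShort_of_strictMono (f := F ∘ f) (fun w w' hw => (hf hw).2) hα

/-- Let `K` be a linearly ordered field and `O` a valuation ring of `K` that is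
convex with respect to the ordering.  Let `R := O/m` be the ordered residue field (realized as any
linearly ordered field `R` together with a monotone surjective ring homomorphism `π : O →+* R`;
as `O` is local with maximal ideal `m`, this forces `ker π = m` and the order on `R` to be the one
induced by declaring the image of `O^{≥0}` to be the nonnegative elements), and let
`Γ := K×/O×` be the ordered value group (realized as any linearly ordered abelian group `Γ`
together with a map `v : K → Γ` which is surjective on `K×`, additive on products of nonzero
elements, and satisfies `v a ≥ 0 ↔ a ∈ O` for `a ≠ 0`).  Then `K` is short iff both the ordered
field `R` and the ordered abelian group `Γ` are short. -/
theorem short_iff_residueField_and_valueGroup_short {K R Γ : Type*}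
    [Field K] [LinearOrder K] [IsStrictOrderedRing K]
    [Field R] [LinearOrder R] [IsStrictOrderedRing R]
    [AddCommGroup Γ] [LinearOrder Γ] [IsOrderedAddMonoid Γ]
    (O : ValuationSubring K)
    (hconvex : ∀ x y : K, 0 ≤ x → x ≤ y → y ∈ O → x ∈ O)
    (π : O →+* R) (hπsurj : Function.Surjective π) (hπmono : Monotone π)
    (v : K → Γ)
    (hvmul : ∀ a b : K, a ≠ 0 → b ≠ 0 → v (a * b) = v a + v b)
    (hvsurj : ∀ γ : Γ, ∃ a : K, a ≠ 0 ∧ v a = γ)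
    (hvO : ∀ a : K, a ≠ 0 → (0 ≤ v a ↔ a ∈ O)) :
    IsShort K ↔ (IsShort R ∧ IsShort Γ) := by
  classical
  have hv1 : v 1 = 0 := by
    have h := hvmul 1 1 one_ne_zero one_ne_zero
    rw [one_mul] at h
    exact left_eq_add.mp h
  have hvinv : ∀ a : K, a ≠ 0 → v a⁻¹ = - v a := by
    intro a ha
    have h := hvmul a a⁻¹ ha (inv_ne_zero ha)
    rw [mul_inv_cancel₀ ha, hv1] at h
    exact eq_neg_of_add_eq_zero_right h.symm
  have hvdiv : ∀ a b : K, a ≠ 0 → b ≠ 0 → v (a / b) = v a - v b := by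
    intro a b ha hb
    rw [div_eq_mul_inv, hvmul a b⁻¹ ha (inv_ne_zero hb), hvinv b hb, sub_eq_add_neg]
  have hvle : ∀ a b : K, 0 < a → a ≤ b → v b ≤ v a := by
    intro a b ha hab
    have hb : 0 < b := lt_of_lt_of_le ha hab
    have hmem : a / b ∈ O :=
      hconvex (a / b) 1 (le_of_lt (div_pos ha hb)) ((div_le_one hb).2 hab) (one_mem O)
    have h0 : 0 ≤ v (a / b) := (hvO _ (div_ne_zero (ne_of_gt ha) (ne_of_gt hb))).2 hmem
    rw [hvdiv a b (ne_of_gt ha) (ne_of_gt hb)] at h0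
    exact sub_nonneg.mp h0
  have hvlt : ∀ a b : K, 0 < a → 0 < b → v a < v b → b < a := by
    intro a b ha hb h
    by_contra hc
    exact absurd (hvle a b ha (not_lt.mp hc)) (not_le.2 h)
  have hvneg1 : v (-1 : K) = 0 := by
    have h := hvinv (-1 : K) (by norm_num)
    rw [inv_neg_one] at h
    have h0 : 0 ≤ v (-1 : K) := (hvO _ (by norm_num)).2 (neg_mem (one_mem O))
    have h1 : v (-1 : K) ≤ 0 := h.symm ▸ neg_nonpos.2 h0
    exact le_antisymm h1 h0
  have hvabs : ∀ a : K, a ≠ 0 → v |a| = v a := by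
    intro a ha
    rcases abs_choice a with h | h
    · rw [h]
    · rw [h, show -a = -1 * a by ring, hvmul (-1) a (by norm_num) ha, hvneg1, zero_add]
  have hπne : ∀ (u : K) (hu : u ∈ O) (hui : u⁻¹ ∈ O), u ≠ 0 → π ⟨u, hu⟩ ≠ 0 := by
    intro u hu hui hu0 h
    have h1 : (⟨u, hu⟩ * ⟨u⁻¹, hui⟩ : O) = 1 := Subtype.ext (by simp [mul_inv_cancel₀ hu0])
    have h2 := congrArg π h1
    rw [map_mul, map_one, h, zero_mul] at h2
    exact zero_ne_one h2
  have hπlt : ∀ x y : O, π x < π y → (x : K) < y := by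
    intro x y h
    by_contra hc
    have : y ≤ x := by exact_mod_cast not_lt.mp hc
    exact absurd (hπmono this) (not_le.2 h)
  have hπnonneg : ∀ x : O, (0 : K) ≤ x → 0 ≤ π x := by
    intro x hx
    have h0 : (0 : O) ≤ x := by exact_mod_cast hx
    simpa using hπmono h0
  constructor
  · intro hK
    constructor
    · refine isShort_of_no_chains ?_ ?_
      · intro g hg
        choose u hu using fun w => hπsurj (g w)
        refine absurd hK (not_isShort_of_strictMono (f := fun w => (u w : K)) ?_)
        intro w w' hww
        exact hπlt _ _ (by rw [hu, hu]; exact hg hww)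
      · intro g hg
        choose u hu using fun w => hπsurj (g w)
        refine absurd hK (not_isShort_of_strictAnti (f := fun w => (u w : K)) ?_)
        intro w w' hww
        exact hπlt _ _ (by rw [hu, hu]; exact hg hww)
    · refine isShort_of_no_chains ?_ ?_
      · intro g hg
        choose a ha0 hva using fun w => hvsurj (g w)
        refine absurd hK (not_isShort_of_strictAnti (f := fun w => |a w|) ?_)
        intro w w' hww
        apply hvlt |a w| |a w'| (abs_pos.2 (ha0 w)) (abs_pos.2 (ha0 w'))
        rw [hvabs _ (ha0 w), hvabs _ (ha0 w'), hva, hva]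
        exact hg hww
      · intro g hg
        choose a ha0 hva using fun w => hvsurj (g w)
        refine absurd hK (not_isShort_of_strictMono (f := fun w => |a w|) ?_)
        intro w w' hww
        apply hvlt |a w'| |a w| (abs_pos.2 (ha0 w')) (abs_pos.2 (ha0 w))
        rw [hvabs _ (ha0 w'), hvabs _ (ha0 w), hva, hva]
        exact hg hww
  · rintro ⟨hR, hΓ⟩
    have main : ∀ f : Wo → K, ¬ StrictMono f := by
      intro f hf
      have step1 : ∀ α : Wo, ∃ (b : Wo) (δ : Γ), α < b ∧ ∀ w, b ≤ w → v (f w - f α) = δ := by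
        intro α
        obtain ⟨s, hs⟩ := exists_gt_Wo α
        obtain ⟨w₁, hw₁s, hw₁⟩ := eventually_constant_of_antitone hΓ
          (fun w => v (f w - f α)) s (by
            intro a b hsa hab
            exact hvle _ _ (sub_pos.2 (hf (lt_of_lt_of_le hs hsa)))
              (sub_le_sub_right (hf.monotone hab) _))
        exact ⟨w₁, v (f w₁ - f α), lt_of_lt_of_le hs hw₁s, hw₁⟩
      choose B d hB hBv using step1
      have hd_mono : Monotone d := by
        intro a a' haa'
        rcases eq_or_lt_of_le haa' with rfl | hlt
        · exact le_rfl
        · have h1 : v (f (max (B a) (B a')) - f a) = d a := hBv a _ (le_max_left _ _)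
          have h2 : v (f (max (B a) (B a')) - f a') = d a' := hBv a' _ (le_max_right _ _)
          rw [← h1, ← h2]
          apply hvle
          · exact sub_pos.2 (hf (lt_of_lt_of_le (hB a') (le_max_right _ _)))
          · exact sub_le_sub_left (hf.monotone haa') _
      obtain ⟨α₁, -, hα₁⟩ := eventually_constant_of_monotone hΓ d (Classical.arbitrary Wo)
        (fun a b _ hab => hd_mono hab)
      have hc : (0 : K) < f (B α₁) - f α₁ := sub_pos.2 (hf (hB α₁))
      have hvc : v (f (B α₁) - f α₁) = d α₁ := hBv α₁ (B α₁) le_rfl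
      set c : K := f (B α₁) - f α₁ with hc_def
      have key : ∀ a a' : Wo, α₁ ≤ a → a < a' → d α₁ ≤ v (f a' - f a) := by
        intro a a' h1 h2
        have hge := hvle (f a' - f a) (f (max (B a) a') - f a)
          (sub_pos.2 (hf h2)) (sub_le_sub_right (hf.monotone (le_max_right _ _)) _)
        rw [hBv a _ (le_max_left _ _)] at hge
        rw [← hα₁ a h1]
        exact hge
      have mem : ∀ a a' : Wo, α₁ ≤ a → a < a' → (f a' - f a) / c ∈ O := by
        intro a a' h1 h2
        have hd0 : f a' - f a ≠ 0 := ne_of_gt (sub_pos.2 (hf h2))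
        apply (hvO _ (div_ne_zero hd0 (ne_of_gt hc))).1
        rw [hvdiv _ _ hd0 (ne_of_gt hc), hvc]
        exact sub_nonneg.2 (key a a' h1 h2)
      obtain ⟨s₁, hs₁⟩ := exists_gt_Wo α₁
      set t : Wo → R :=
        fun β => if hm : (f β - f α₁) / c ∈ O then π ⟨(f β - f α₁) / c, hm⟩ else 0 with ht_def
      have hstep : ∀ a b : Wo, ∀ (ha : α₁ < a) (hab : a < b),
          t b = t a + π ⟨(f b - f a) / c, mem a b ha.le hab⟩ := by
        intro a b ha hab
        have hma : (f a - f α₁) / c ∈ O := mem α₁ a le_rfl ha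
        have hmb : (f b - f α₁) / c ∈ O := mem α₁ b le_rfl (ha.trans hab)
        simp only [ht_def]
        rw [dif_pos hma, dif_pos hmb, ← map_add]
        congr 1
        apply Subtype.ext
        push_cast
        ring
      have ht_mono : ∀ ⦃a b : Wo⦄, s₁ ≤ a → a ≤ b → t a ≤ t b := by
        intro a b hsa hab
        rcases eq_or_lt_of_le hab with rfl | hlt
        · exact le_rfl
        · have ha1 : α₁ < a := lt_of_lt_of_le hs₁ hsa
          rw [hstep a b ha1 hlt]
          have h0 : (0 : K) ≤ (f b - f a) / c := le_of_lt (div_pos (sub_pos.2 (hf hlt)) hc)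
          exact le_add_of_nonneg_right (hπnonneg _ h0)
      obtain ⟨β₂, hβ₂s, hβ₂⟩ := eventually_constant_of_monotone hR t s₁ ht_mono
      have hβ₂α₁ : α₁ < β₂ := lt_of_lt_of_le hs₁ hβ₂s
      have hb : β₂ < B β₂ := hB β₂
      have h1 : t (B β₂) = t β₂ := hβ₂ (B β₂) hb.le
      have h2 := hstep β₂ (B β₂) hβ₂α₁ hb
      rw [h1] at h2
      have h3 : π ⟨(f (B β₂) - f β₂) / c, mem β₂ (B β₂) hβ₂α₁.le hb⟩ = 0 :=
        (left_eq_add.mp h2)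
      have hd0 : f (B β₂) - f β₂ ≠ 0 := ne_of_gt (sub_pos.2 (hf hb))
      have hu0 : v ((f (B β₂) - f β₂) / c) = 0 := by
        rw [hvdiv _ _ hd0 (ne_of_gt hc), hvc, hBv β₂ (B β₂) le_rfl, hα₁ β₂ hβ₂α₁.le]
        exact sub_self _
      have hui : ((f (B β₂) - f β₂) / c)⁻¹ ∈ O := by
        apply (hvO _ (inv_ne_zero (div_ne_zero hd0 (ne_of_gt hc)))).1
        rw [hvinv _ (div_ne_zero hd0 (ne_of_gt hc)), hu0, neg_zero]
      exact hπne _ (mem β₂ (B β₂) hβ₂α₁.le hb) hui (div_ne_zero hd0 (ne_of_gt hc)) h3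
    refine isShort_of_no_chains main ?_
    intro f hf
    exact main (fun w => - (f w)) (fun w w' h => neg_lt_neg (hf h))
end

section
/- Let Δ ⊆ Γ be an extension of linearly ordered abelian groups. If the quotient group Γ/Δ has countable rational rank, i.e., dim_ℚ (ℚ ⊗_ℤ (Γ/Δ)) ≤ ℵ₀, then Γ is short if and only if Δ is short. -/
private theorem isShort_cofinal_aux {Γ : Type*} [AddCommGroup Γ] [LinearOrder Γ] [IsOrderedAddMonoid Γ]
    (Δ : AddSubgroup Γ) (hcnt : Countable (TensorProduct ℤ ℚ (Γ ⧸ Δ))) (hΔ : IsShort Δ)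
    (A : Set Γ) : ∃ B ⊆ A, B.Countable ∧ ∀ x ∈ A, ∃ y ∈ B, x ≤ y := by
  classical
  set f : Γ → TensorProduct ℤ ℚ (Γ ⧸ Δ) :=
    fun γ => (TensorProduct.mk ℤ ℚ (Γ ⧸ Δ) 1) (QuotientAddGroup.mk γ) with hfdef
  have hIL : IsLocalizedModule (nonZeroDivisors ℤ) (TensorProduct.mk ℤ ℚ (Γ ⧸ Δ) 1) :=
    (isLocalizedModule_iff_isBaseChange (nonZeroDivisors ℤ) ℚ _).mpr
      (TensorProduct.isBaseChange ℤ (Γ ⧸ Δ) ℚ)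
  have key0 : ∀ a : Γ, (TensorProduct.mk ℤ ℚ (Γ ⧸ Δ) 1) (QuotientAddGroup.mk a) = 0 →
      ∃ n : ℕ, n ≠ 0 ∧ n • a ∈ Δ := by
    intro a h
    obtain ⟨s, hs⟩ := (IsLocalizedModule.eq_zero_iff (nonZeroDivisors ℤ) _).mp h
    have hsne : (s : ℤ) ≠ 0 := nonZeroDivisors.coe_ne_zero s
    have hmem : (s : ℤ) • a ∈ Δ := by
      rwa [Submonoid.smul_def, ← QuotientAddGroup.mk_zsmul, QuotientAddGroup.eq_zero_iff] at hs
    refine ⟨(s : ℤ).natAbs, Int.natAbs_ne_zero.mpr hsne, ?_⟩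
    rw [← natCast_zsmul]
    rcases Int.natAbs_eq (s : ℤ) with h' | h'
    · rw [← h']; exact hmem
    · have h2 := Δ.neg_mem hmem
      rw [← neg_zsmul, h', neg_neg] at h2
      exact h2
  have key : ∀ a a' : Γ, f a = f a' → ∃ n : ℕ, n ≠ 0 ∧ n • (a - a') ∈ Δ := by
    intro a a' h
    apply key0
    have : ((a - a' : Γ) : Γ ⧸ Δ) = ((a : Γ ⧸ Δ)) - ((a' : Γ ⧸ Δ)) := by
      simp [QuotientAddGroup.mk_sub]
    rw [this, map_sub]
    simpa [hfdef, sub_eq_zero] using h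
  set base : TensorProduct ℤ ℚ (Γ ⧸ Δ) → Γ :=
    fun v => if h : ∃ a ∈ A, f a = v then h.choose else 0 with hbasedef
  have hbaseA : ∀ a ∈ A, base (f a) ∈ A ∧ f (base (f a)) = f a := by
    intro a ha
    have h : ∃ a' ∈ A, f a' = f a := ⟨a, ha, rfl⟩
    simp only [hbasedef, dif_pos h]
    exact ⟨h.choose_spec.1, h.choose_spec.2⟩
  set piece : TensorProduct ℤ ℚ (Γ ⧸ Δ) → ℕ → Set Γ :=
    fun v n => {a | a ∈ A ∧ f a = v ∧ (n + 1) • (a - base v) ∈ Δ} with hpiecedef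
  have cover : ∀ a ∈ A, ∃ n : ℕ, a ∈ piece (f a) n := by
    intro a ha
    obtain ⟨hbA, hbf⟩ := hbaseA a ha
    obtain ⟨n, hn0, hnmem⟩ := key a (base (f a)) hbf.symm
    obtain ⟨m, rfl⟩ := Nat.exists_eq_succ_of_ne_zero hn0
    exact ⟨m, ha, rfl, hnmem⟩
  have hexB : ∀ (v : TensorProduct ℤ ℚ (Γ ⧸ Δ)) (n : ℕ),
      ∃ B ⊆ piece v n, B.Countable ∧ ∀ x ∈ piece v n, ∃ y ∈ B, x ≤ y := by
    intro v n
    set S : Set Δ := {d | ∃ a ∈ piece v n, (n + 1) • (a - base v) = (d : Γ)} with hSdef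
    obtain ⟨B', hB'S, hB'c, hB'cof⟩ := (hΔ S).1
    have hch : ∀ d : B', ∃ a, a ∈ piece v n ∧ (n + 1) • (a - base v) = ((d : Δ) : Γ) := by
      rintro ⟨d, hd⟩
      obtain ⟨a, ha, he⟩ := hB'S hd
      exact ⟨a, ha, he⟩
    choose pa hpaP hpaE using hch
    have : Countable B' := hB'c.to_subtype
    refine ⟨Set.range pa, ?_, Set.countable_range pa, ?_⟩
    · rintro _ ⟨d, rfl⟩; exact hpaP d
    · intro x hx
      have hxd : ((n + 1) • (x - base v)) ∈ Δ := hx.2.2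
      have hd0 : (⟨_, hxd⟩ : Δ) ∈ S := ⟨x, hx, rfl⟩
      obtain ⟨d, hdB, hled⟩ := hB'cof _ hd0
      refine ⟨pa ⟨d, hdB⟩, ⟨⟨d, hdB⟩, rfl⟩, ?_⟩
      have hpaeq := hpaE ⟨d, hdB⟩
      have hle : (n + 1) • (x - base v) ≤ (n + 1) • (pa ⟨d, hdB⟩ - base v) := by
        rw [hpaeq]; exact hled
      have h3 := le_of_nsmul_le_nsmul_right (Nat.succ_ne_zero n) hle
      exact (sub_le_sub_iff_right _).mp h3
  choose Bp hBpsub hBpc hBpcof using hexB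
  refine ⟨⋃ v ∈ f '' A, ⋃ n : ℕ, Bp v n, ?_, ?_, ?_⟩
  · intro x hx
    simp only [Set.mem_iUnion] at hx
    obtain ⟨v, hv, n, hn⟩ := hx
    exact (hBpsub v n hn).1
  · exact (f '' A).to_countable.biUnion fun v _ => Set.countable_iUnion fun n => hBpc v n
  · intro x hx
    obtain ⟨n, hn⟩ := cover x hx
    obtain ⟨y, hyB, hxy⟩ := hBpcof (f x) n x hn
    refine ⟨y, ?_, hxy⟩
    simp only [Set.mem_iUnion]
    exact ⟨f x, ⟨x, hx, rfl⟩, n, hyB⟩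

/-- If `Δ ⊆ Γ` is an extension of linearly ordered abelian groups such that the
quotient group `Γ/Δ` has countable rational rank, i.e. `dim_ℚ (ℚ ⊗[ℤ] (Γ/Δ)) ≤ ℵ₀`, then `Γ` is
short iff `Δ` is short. -/
theorem short_iff_short_of_countable_rationalRank {Γ : Type*} [AddCommGroup Γ] [LinearOrder Γ]
    [IsOrderedAddMonoid Γ]
    (Δ : AddSubgroup Γ)
    (hrank : Module.rank ℚ (TensorProduct ℤ ℚ (Γ ⧸ Δ)) ≤ Cardinal.aleph0) :
    IsShort Γ ↔ IsShort Δ := by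
  have hcnt : Countable (TensorProduct ℤ ℚ (Γ ⧸ Δ)) := by
    set V := TensorProduct ℤ ℚ (Γ ⧸ Δ)
    let b := Module.Basis.ofVectorSpace ℚ V
    have hmk : Cardinal.mk (Module.Basis.ofVectorSpaceIndex ℚ V) = Module.rank ℚ V := b.mk_eq_rank''
    have hc : Countable (Module.Basis.ofVectorSpaceIndex ℚ V) :=
      Cardinal.mk_le_aleph0_iff.mp (hmk ▸ hrank)
    exact b.repr.toEquiv.countable_iff.mpr inferInstance
  constructor
  · intro hΓ A
    constructor
    · obtain ⟨B', hsub, hc, hcof⟩ := (hΓ (((↑) : Δ → Γ) '' A)).1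
      refine ⟨((↑) : Δ → Γ) ⁻¹' B', ?_, hc.preimage Subtype.coe_injective, ?_⟩
      · intro x hx
        obtain ⟨a, haA, hax⟩ := hsub hx
        exact (Subtype.coe_injective hax) ▸ haA
      · intro x hxA
        obtain ⟨y, hyB, hxy⟩ := hcof x ⟨x, hxA, rfl⟩
        have hyΔ : y ∈ Δ := by obtain ⟨a, -, rfl⟩ := hsub hyB; exact a.2
        exact ⟨⟨y, hyΔ⟩, hyB, hxy⟩
    · obtain ⟨B', hsub, hc, hcof⟩ := (hΓ (((↑) : Δ → Γ) '' A)).2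
      refine ⟨((↑) : Δ → Γ) ⁻¹' B', ?_, hc.preimage Subtype.coe_injective, ?_⟩
      · intro x hx
        obtain ⟨a, haA, hax⟩ := hsub hx
        exact (Subtype.coe_injective hax) ▸ haA
      · intro x hxA
        obtain ⟨y, hyB, hxy⟩ := hcof x ⟨x, hxA, rfl⟩
        have hyΔ : y ∈ Δ := by obtain ⟨a, -, rfl⟩ := hsub hyB; exact a.2
        exact ⟨⟨y, hyΔ⟩, hyB, hxy⟩
  · intro hΔ A
    refine ⟨isShort_cofinal_aux Δ hcnt hΔ A, ?_⟩
    obtain ⟨B, hsub, hc, hcof⟩ := isShort_cofinal_aux Δ hcnt hΔ ((fun x => -x) '' A)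
    refine ⟨(fun x => -x) '' B, ?_, hc.image _, ?_⟩
    · rintro _ ⟨b, hb, rfl⟩
      obtain ⟨a, ha, rfl⟩ := hsub hb
      simpa using ha
    · intro x hx
      obtain ⟨y, hyB, hxy⟩ := hcof (-x) ⟨x, hx, rfl⟩
      exact ⟨-y, ⟨y, hyB, rfl⟩, neg_le.mp hxy⟩
end

section
/- Let Γ be a linearly ordered abelian group and Δ a convex subgroup of Γ. Then Γ is short if and only if both Δ and the quotient group Γ/Δ, equipped with the induced linear order (the image of Γ^{≥0} being the set of nonnegative elements), are short. -/
/-- Key lemma: cofinality direction of the "if" part. -/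
private lemma short_key {Γ Q : Type*}
    [AddCommGroup Γ] [LinearOrder Γ] [IsOrderedAddMonoid Γ]
    [AddCommGroup Q] [LinearOrder Q] [IsOrderedAddMonoid Q]
    (Δ : AddSubgroup Γ) (π : Γ →+ Q) (hker : π.ker = Δ) (hmono : Monotone π)
    (hΔ : ∀ S : Set Δ, ∃ B ⊆ S, B.Countable ∧ ∀ x ∈ S, ∃ y ∈ B, x ≤ y)
    (hQ : ∀ S : Set Q, ∃ B ⊆ S, B.Countable ∧ ∀ x ∈ S, ∃ y ∈ B, x ≤ y)
    (A : Set Γ) : ∃ B ⊆ A, B.Countable ∧ ∀ x ∈ A, ∃ y ∈ B, x ≤ y := by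
  obtain ⟨C, hCsub, hCcount, hCcof⟩ := hQ (π '' A)
  -- a representative of each nonempty fiber
  have hrep : ∀ q ∈ π '' A, ∃ a, a ∈ A ∧ π a = q := by
    intro q hq; exact hq
  classical
  set rep : Q → Γ := fun q => if h : q ∈ π '' A then (hrep q h).choose else 0 with hrepdef
  have hrepA : ∀ q ∈ π '' A, rep q ∈ A := by
    intro q hq; simp only [hrepdef, dif_pos hq]; exact (hrep q hq).choose_spec.1
  have hrepπ : ∀ q ∈ π '' A, π (rep q) = q := by
    intro q hq; simp only [hrepdef, dif_pos hq]; exact (hrep q hq).choose_spec.2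
  -- the fiber over q, translated into Δ
  set S : Q → Set Δ := fun q => {d | (d : Γ) + rep q ∈ A} with hSdef
  choose D hDsub hDcount hDcof using fun q => hΔ (S q)
  refine ⟨⋃ q ∈ C, (fun d : Δ => (d : Γ) + rep q) '' D q, ?_, ?_, ?_⟩
  · intro y hy
    simp only [Set.mem_iUnion, Set.mem_image] at hy
    obtain ⟨q, hqC, d, hd, rfl⟩ := hy
    exact hDsub q hd
  · exact hCcount.biUnion fun q _ => ((hDcount q).image _)
  · intro x hx
    obtain ⟨q, hqC, hq⟩ := hCcof (π x) ⟨x, hx, rfl⟩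
    have hqA : q ∈ π '' A := hCsub hqC
    rcases eq_or_lt_of_le hq with heq | hlt
    · -- x is in the fiber over q
      have hdmem : x - rep q ∈ Δ := by
        rw [← hker, AddMonoidHom.mem_ker, map_sub, hrepπ q hqA, ← heq, sub_self]
      have hdS : (⟨x - rep q, hdmem⟩ : Δ) ∈ S q := by
        simp only [hSdef, Set.mem_setOf_eq, sub_add_cancel]
        exact hx
      obtain ⟨e, heD, hle⟩ := hDcof q _ hdS
      refine ⟨(e : Γ) + rep q, ?_, ?_⟩
      · simp only [Set.mem_iUnion, Set.mem_image]
        exact ⟨q, hqC, e, heD, rfl⟩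
      · have : (x - rep q : Γ) ≤ (e : Γ) := hle
        exact sub_le_iff_le_add.mp this
    · -- x is strictly below the fiber over q
      obtain ⟨a, haA, haπ⟩ := hqA
      have hdmem : a - rep q ∈ Δ := by
        rw [← hker, AddMonoidHom.mem_ker, map_sub, hrepπ q (hCsub hqC), haπ, sub_self]
      have hdS : (⟨a - rep q, hdmem⟩ : Δ) ∈ S q := by
        simp only [hSdef, Set.mem_setOf_eq, sub_add_cancel]
        exact haA
      obtain ⟨e, heD, -⟩ := hDcof q _ hdS
      refine ⟨(e : Γ) + rep q, ?_, ?_⟩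
      · simp only [Set.mem_iUnion, Set.mem_image]
        exact ⟨q, hqC, e, heD, rfl⟩
      · by_contra hcon
        push_neg at hcon
        have h1 : π ((e : Γ) + rep q) ≤ π x := hmono hcon.le
        have h2 : π ((e : Γ) + rep q) = q := by
          have he0 : π (e : Γ) = 0 := by
            rw [← AddMonoidHom.mem_ker, hker]; exact e.2
          rw [map_add, he0, zero_add, hrepπ q (hCsub hqC)]
        rw [h2] at h1
        exact absurd h1 (not_le.mpr hlt)

/-- Let `Γ` be a linearly ordered abelian group and `Δ` a convex subgroup of `Γ`.
Then `Γ` is short iff both `Δ` and the quotient group `Γ/Δ`, equipped with the induced linear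
order, are short.  The ordered quotient `Γ/Δ` is realized as any linearly ordered abelian group
`Q` together with a monotone surjective group homomorphism `π : Γ →+ Q` with kernel `Δ`; since
`Δ` is convex, this pins down the order on `Q` as the one induced by the order of `Γ`. -/
theorem short_iff_convex_subgroup_and_quotient_short {Γ Q : Type*}
    [AddCommGroup Γ] [LinearOrder Γ] [IsOrderedAddMonoid Γ]
    [AddCommGroup Q] [LinearOrder Q] [IsOrderedAddMonoid Q]
    (Δ : AddSubgroup Γ) (hconvex : ∀ x y : Γ, 0 ≤ x → x ≤ y → y ∈ Δ → x ∈ Δ)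
    (π : Γ →+ Q) (hsurj : Function.Surjective π) (hker : π.ker = Δ) (hmono : Monotone π) :
    IsShort Γ ↔ (IsShort Δ ∧ IsShort Q) := by
  constructor
  · intro hΓ
    constructor
    · -- shortness is hereditary to subtypes
      intro A
      obtain ⟨⟨B1, h1sub, h1c, h1cof⟩, ⟨B2, h2sub, h2c, h2coi⟩⟩ :=
        hΓ ((Subtype.val : Δ → Γ) '' A)
      constructor
      · refine ⟨(Subtype.val ⁻¹' B1) ∩ A, Set.inter_subset_right, ?_, ?_⟩
        · exact (h1c.preimage Subtype.val_injective).mono Set.inter_subset_left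
        · intro x hx
          obtain ⟨y, hyB, hy⟩ := h1cof (x : Γ) ⟨x, hx, rfl⟩
          obtain ⟨y', hy'A, rfl⟩ := h1sub hyB
          exact ⟨y', ⟨hyB, hy'A⟩, hy⟩
      · refine ⟨(Subtype.val ⁻¹' B2) ∩ A, Set.inter_subset_right, ?_, ?_⟩
        · exact (h2c.preimage Subtype.val_injective).mono Set.inter_subset_left
        · intro x hx
          obtain ⟨y, hyB, hy⟩ := h2coi (x : Γ) ⟨x, hx, rfl⟩
          obtain ⟨y', hy'A, rfl⟩ := h2sub hyB
          exact ⟨y', ⟨hyB, hy'A⟩, hy⟩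
    · -- shortness passes to monotone surjective images
      intro A
      set s : Q → Γ := Function.surjInv hsurj with hsdef
      have hs : ∀ q, π (s q) = q := fun q => Function.surjInv_eq hsurj q
      obtain ⟨⟨B1, h1sub, h1c, h1cof⟩, ⟨B2, h2sub, h2c, h2coi⟩⟩ := hΓ (s '' A)
      constructor
      · refine ⟨π '' B1, ?_, h1c.image _, ?_⟩
        · intro y hy
          obtain ⟨b, hbB, rfl⟩ := hy
          obtain ⟨a, haA, rfl⟩ := h1sub hbB
          rwa [hs]
        · intro q hq
          obtain ⟨y, hyB, hy⟩ := h1cof (s q) ⟨q, hq, rfl⟩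
          exact ⟨π y, ⟨y, hyB, rfl⟩, by calc q = π (s q) := (hs q).symm
                                             _ ≤ π y := hmono hy⟩
      · refine ⟨π '' B2, ?_, h2c.image _, ?_⟩
        · intro y hy
          obtain ⟨b, hbB, rfl⟩ := hy
          obtain ⟨a, haA, rfl⟩ := h2sub hbB
          rwa [hs]
        · intro q hq
          obtain ⟨y, hyB, hy⟩ := h2coi (s q) ⟨q, hq, rfl⟩
          exact ⟨π y, ⟨y, hyB, rfl⟩, by calc π y ≤ π (s q) := hmono hy
                                             _ = q := hs q⟩
  · rintro ⟨hΔ, hQ⟩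
    intro A
    constructor
    · exact short_key Δ π hker hmono (fun S => (hΔ S).1) (fun S => (hQ S).1) A
    · -- coinitiality via negation
      have hΔ' : ∀ S : Set Δ, ∃ B ⊆ S, B.Countable ∧ ∀ x ∈ S, ∃ y ∈ B, x ≤ y :=
        fun S => (hΔ S).1
      have hQ' : ∀ S : Set Q, ∃ B ⊆ S, B.Countable ∧ ∀ x ∈ S, ∃ y ∈ B, x ≤ y :=
        fun S => (hQ S).1
      obtain ⟨B, hBsub, hBc, hBcof⟩ :=
        short_key Δ π hker hmono hΔ' hQ' (Neg.neg ⁻¹' A)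
      refine ⟨Neg.neg '' B, ?_, hBc.image _, ?_⟩
      · rintro y ⟨b, hbB, rfl⟩
        exact hBsub hbB
      · intro x hx
        have : -x ∈ Neg.neg ⁻¹' A := by simpa using hx
        obtain ⟨y, hyB, hy⟩ := hBcof (-x) this
        exact ⟨-y, ⟨y, hyB, rfl⟩, neg_le.mp hy⟩
end

section
/- Let K be a linearly ordered field with a convex valuation ring O (if 0 ≤ x ≤ y and y ∈ O then x ∈ O) whose residue field R := O/m, ordered by declaring the image of O^{≥0} to be the set of nonnegative elements, is archimedean. Then K is short if and only if the value group Γ_K := K×/O×, ordered so that v(a) ≥ 0 iff a ∈ O, is short. -/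
namespace ShortAux

open Set Classical

variable {β : Type*} [LinearOrder β]

/-- every nonempty subset has a least element -/
def WOle (X : Set β) : Prop := ∀ Y ⊆ X, Y.Nonempty → ∃ m ∈ Y, ∀ y ∈ Y, m ≤ y

/-- every nonempty subset has a greatest element -/
def WOge (X : Set β) : Prop := ∀ Y ⊆ X, Y.Nonempty → ∃ m ∈ Y, ∀ y ∈ Y, y ≤ m

lemma trim_le (X : Set β) (hwo : WOle X) (hunc : ¬ X.Countable) :
    ∃ T, T ⊆ X ∧ ¬ T.Countable ∧ WOle T ∧ ∀ x ∈ T, {y ∈ T | y < x}.Countable := by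
  set T : Set β := {x ∈ X | {y ∈ X | y < x}.Countable} with hTdef
  have hTX : T ⊆ X := fun x hx => hx.1
  refine ⟨T, hTX, ?_, ?_, ?_⟩
  · intro hTc
    rcases (X \ T).eq_empty_or_nonempty with hemp | hne
    · apply hunc
      have : X ⊆ T := fun x hx => by
        by_contra hxT
        have hmem : x ∈ X \ T := ⟨hx, hxT⟩
        rw [hemp] at hmem
        exact absurd hmem (notMem_empty x)
      exact hTc.mono this
    · obtain ⟨m, hm, hmin⟩ := hwo (X \ T) diff_subset hne
      have hsub : {y ∈ X | y < m} ⊆ T := by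
        intro y hy
        by_contra hyT
        exact absurd (hmin y ⟨hy.1, hyT⟩) (not_le.2 hy.2)
      have hcm : {y ∈ X | y < m}.Countable := hTc.mono hsub
      exact hm.2 ⟨hm.1, hcm⟩
  · intro Y hY hYne
    exact hwo Y (hY.trans hTX) hYne
  · intro x hx
    have hsub : {y ∈ T | y < x} ⊆ {y ∈ X | y < x} := fun y hy => ⟨hTX hy.1, hy.2⟩
    exact hx.2.mono hsub

lemma trim_ge (X : Set β) (hwo : WOge X) (hunc : ¬ X.Countable) :
    ∃ T, T ⊆ X ∧ ¬ T.Countable ∧ WOge T ∧ ∀ x ∈ T, {y ∈ T | x < y}.Countable := by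
  set T : Set β := {x ∈ X | {y ∈ X | x < y}.Countable} with hTdef
  have hTX : T ⊆ X := fun x hx => hx.1
  refine ⟨T, hTX, ?_, ?_, ?_⟩
  · intro hTc
    rcases (X \ T).eq_empty_or_nonempty with hemp | hne
    · apply hunc
      have : X ⊆ T := fun x hx => by
        by_contra hxT
        have hmem : x ∈ X \ T := ⟨hx, hxT⟩
        rw [hemp] at hmem
        exact absurd hmem (notMem_empty x)
      exact hTc.mono this
    · obtain ⟨m, hm, hmax⟩ := hwo (X \ T) diff_subset hne
      have hsub : {y ∈ X | m < y} ⊆ T := by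
        intro y hy
        by_contra hyT
        exact absurd (hmax y ⟨hy.1, hyT⟩) (not_le.2 hy.2)
      have hcm : {y ∈ X | m < y}.Countable := hTc.mono hsub
      exact hm.2 ⟨hm.1, hcm⟩
  · intro Y hY hYne
    exact hwo Y (hY.trans hTX) hYne
  · intro x hx
    have hsub : {y ∈ T | x < y} ⊆ {y ∈ X | x < y} := fun y hy => ⟨hTX hy.1, hy.2⟩
    exact hx.2.mono hsub

lemma exists_bound_le (T : Set β) (hseg : ∀ x ∈ T, {y ∈ T | y < x}.Countable)
    (hunc : ¬ T.Countable) {C : Set β} (hC : C.Countable) (hCT : C ⊆ T) :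
    ∃ z ∈ T, ∀ x ∈ C, x < z := by
  by_contra h
  push_neg at h
  apply hunc
  have hsub : T ⊆ ⋃ x ∈ C, insert x {y ∈ T | y < x} := by
    intro z hz
    obtain ⟨x, hxC, hx⟩ := h z hz
    refine mem_biUnion hxC ?_
    rcases eq_or_lt_of_le hx with rfl | hlt
    · exact mem_insert _ _
    · exact mem_insert_of_mem _ ⟨hz, hlt⟩
  exact (hC.biUnion fun x hx => ((hseg x (hCT hx)).insert x)).mono hsub

lemma exists_bound_ge (T : Set β) (hseg : ∀ x ∈ T, {y ∈ T | x < y}.Countable)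
    (hunc : ¬ T.Countable) {C : Set β} (hC : C.Countable) (hCT : C ⊆ T) :
    ∃ z ∈ T, ∀ x ∈ C, z < x := by
  by_contra h
  push_neg at h
  apply hunc
  have hsub : T ⊆ ⋃ x ∈ C, insert x {y ∈ T | x < y} := by
    intro z hz
    obtain ⟨x, hxC, hx⟩ := h z hz
    refine mem_biUnion hxC ?_
    rcases eq_or_lt_of_le hx with rfl | hlt
    · exact mem_insert _ _
    · exact mem_insert_of_mem _ ⟨hz, hlt⟩
  exact (hC.biUnion fun x hx => ((hseg x (hCT hx)).insert x)).mono hsub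

lemma countable_of_WOle_of_short (hshort : IsShort β) (X : Set β) (hwo : WOle X) :
    X.Countable := by
  by_contra hunc
  obtain ⟨T, hTX, hTunc, hTwo, hTseg⟩ := trim_le X hwo hunc
  obtain ⟨⟨B, hBT, hBc, hBcof⟩, -⟩ := hshort T
  obtain ⟨z, hzT, hz⟩ := exists_bound_le T hTseg hTunc hBc hBT
  obtain ⟨y, hyB, hy⟩ := hBcof z hzT
  exact absurd hy (not_le.2 (hz y hyB))

lemma countable_of_WOge_of_short (hshort : IsShort β) (X : Set β) (hwo : WOge X) :
    X.Countable := by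
  by_contra hunc
  obtain ⟨T, hTX, hTunc, hTwo, hTseg⟩ := trim_ge X hwo hunc
  obtain ⟨-, ⟨B, hBT, hBc, hBcoi⟩⟩ := hshort T
  obtain ⟨z, hzT, hz⟩ := exists_bound_ge T hTseg hTunc hBc hBT
  obtain ⟨y, hyB, hy⟩ := hBcoi z hzT
  exact absurd hy (not_le.2 (hz y hyB))

lemma exists_countable_cofinal (A : Set β)
    (h : ∀ X, X ⊆ A → WOle X → X.Countable) :
    ∃ B ⊆ A, B.Countable ∧ ∀ x ∈ A, ∃ y ∈ B, x ≤ y := by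
  let P := {C : Set β // C ⊆ A ∧ WOle C}
  let r : P → P → Prop := fun C D => C.1 ⊆ D.1 ∧ ∀ x ∈ D.1, x ∉ C.1 → ∀ y ∈ C.1, y < x
  have hr : ∀ {a b c : P}, r a b → r b c → r a c := by
    rintro a b c ⟨hab, hab'⟩ ⟨hbc, hbc'⟩
    refine ⟨hab.trans hbc, fun x hx hxa y hy => ?_⟩
    by_cases hxb : x ∈ b.1
    · exact hab' x hxb hxa y hy
    · exact hbc' x hx hxb y (hab hy)
  have hchains : ∀ c : Set P, IsChain r c → ∃ ub, ∀ a ∈ c, r a ub := by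
    intro c hc
    have hUA : (⋃ C ∈ c, (C : P).1) ⊆ A := iUnion₂_subset fun C _ => C.2.1
    have hUwo : WOle (⋃ C ∈ c, (C : P).1) := by
      intro Y hY hYne
      obtain ⟨y₀, hy₀⟩ := hYne
      obtain ⟨C₀, hC₀c, hy₀C₀⟩ := mem_iUnion₂.1 (hY hy₀)
      obtain ⟨m, hm, hmin⟩ := C₀.2.2 (Y ∩ C₀.1) inter_subset_right ⟨y₀, hy₀, hy₀C₀⟩
      refine ⟨m, hm.1, fun y hy => ?_⟩
      obtain ⟨D, hDc, hyD⟩ := mem_iUnion₂.1 (hY hy)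
      by_cases hyC₀ : y ∈ C₀.1
      · exact hmin y ⟨hy, hyC₀⟩
      · rcases eq_or_ne C₀ D with rfl | hne
        · exact absurd hyD hyC₀
        rcases hc hC₀c hDc hne with hCD | hDC
        · exact (hCD.2 y hyD hyC₀ m hm.2).le
        · exact absurd (hDC.1 hyD) hyC₀
    refine ⟨⟨⋃ C ∈ c, (C : P).1, hUA, hUwo⟩, ?_⟩
    intro C hCc
    refine ⟨subset_biUnion_of_mem hCc, fun x hx hxC y hy => ?_⟩
    obtain ⟨D, hDc, hxD⟩ := mem_iUnion₂.1 hx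
    rcases eq_or_ne C D with rfl | hne
    · exact absurd hxD hxC
    rcases hc hCc hDc hne with hCD | hDC
    · exact hCD.2 x hxD hxC y hy
    · exact absurd (hDC.1 hxD) hxC
  obtain ⟨M, hM⟩ := exists_maximal_of_chains_bounded hchains (fun {a b c} => hr)
  refine ⟨M.1, M.2.1, h M.1 M.2.1 M.2.2, ?_⟩
  intro x hxA
  by_contra hx
  push_neg at hx
  have hlt : ∀ y ∈ M.1, y < x := hx
  have hxM : x ∉ M.1 := fun h' => absurd (hlt x h') (lt_irrefl x)
  have hXwo : WOle (insert x M.1) := by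
    intro Y hY hYne
    rcases (Y ∩ M.1).eq_empty_or_nonempty with hemp | hne
    · have hno : ∀ y ∈ Y, y ∉ M.1 := fun y hy hyM => by
        have : y ∈ Y ∩ M.1 := ⟨hy, hyM⟩
        rw [hemp] at this
        exact absurd this (notMem_empty y)
      have hall : ∀ y ∈ Y, y = x := fun y hy => by
        rcases hY hy with h' | h'
        · exact h'
        · exact absurd h' (hno y hy)
      obtain ⟨y₀, hy₀⟩ := hYne
      exact ⟨y₀, hy₀, fun y hy => ((hall y₀ hy₀).trans (hall y hy).symm).le⟩
    · obtain ⟨m, hm, hmin⟩ := M.2.2 (Y ∩ M.1) inter_subset_right hne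
      refine ⟨m, hm.1, fun y hy => ?_⟩
      rcases hY hy with h' | h'
      · exact h' ▸ (hlt m hm.2).le
      · exact hmin y ⟨hy, h'⟩
  have hXA : insert x M.1 ⊆ A := insert_subset hxA M.2.1
  have hMX : r M ⟨insert x M.1, hXA, hXwo⟩ := by
    refine ⟨subset_insert _ _, fun z hz hzM y hy => ?_⟩
    rcases mem_insert_iff.1 hz with rfl | h'
    · exact hlt y hy
    · exact absurd h' hzM
  have := (hM _ hMX).1 (mem_insert x M.1)
  exact hxM this

lemma exists_countable_coinitial (A : Set β)
    (h : ∀ X, X ⊆ A → WOge X → X.Countable) :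
    ∃ B ⊆ A, B.Countable ∧ ∀ x ∈ A, ∃ y ∈ B, y ≤ x := by
  let P := {C : Set β // C ⊆ A ∧ WOge C}
  let r : P → P → Prop := fun C D => C.1 ⊆ D.1 ∧ ∀ x ∈ D.1, x ∉ C.1 → ∀ y ∈ C.1, x < y
  have hr : ∀ {a b c : P}, r a b → r b c → r a c := by
    rintro a b c ⟨hab, hab'⟩ ⟨hbc, hbc'⟩
    refine ⟨hab.trans hbc, fun x hx hxa y hy => ?_⟩
    by_cases hxb : x ∈ b.1
    · exact hab' x hxb hxa y hy
    · exact hbc' x hx hxb y (hab hy)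
  have hchains : ∀ c : Set P, IsChain r c → ∃ ub, ∀ a ∈ c, r a ub := by
    intro c hc
    have hUA : (⋃ C ∈ c, (C : P).1) ⊆ A := iUnion₂_subset fun C _ => C.2.1
    have hUwo : WOge (⋃ C ∈ c, (C : P).1) := by
      intro Y hY hYne
      obtain ⟨y₀, hy₀⟩ := hYne
      obtain ⟨C₀, hC₀c, hy₀C₀⟩ := mem_iUnion₂.1 (hY hy₀)
      obtain ⟨m, hm, hmax⟩ := C₀.2.2 (Y ∩ C₀.1) inter_subset_right ⟨y₀, hy₀, hy₀C₀⟩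
      refine ⟨m, hm.1, fun y hy => ?_⟩
      obtain ⟨D, hDc, hyD⟩ := mem_iUnion₂.1 (hY hy)
      by_cases hyC₀ : y ∈ C₀.1
      · exact hmax y ⟨hy, hyC₀⟩
      · rcases eq_or_ne C₀ D with rfl | hne
        · exact absurd hyD hyC₀
        rcases hc hC₀c hDc hne with hCD | hDC
        · exact (hCD.2 y hyD hyC₀ m hm.2).le
        · exact absurd (hDC.1 hyD) hyC₀
    refine ⟨⟨⋃ C ∈ c, (C : P).1, hUA, hUwo⟩, ?_⟩
    intro C hCc
    refine ⟨subset_biUnion_of_mem hCc, fun x hx hxC y hy => ?_⟩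
    obtain ⟨D, hDc, hxD⟩ := mem_iUnion₂.1 hx
    rcases eq_or_ne C D with rfl | hne
    · exact absurd hxD hxC
    rcases hc hCc hDc hne with hCD | hDC
    · exact hCD.2 x hxD hxC y hy
    · exact absurd (hDC.1 hxD) hxC
  obtain ⟨M, hM⟩ := exists_maximal_of_chains_bounded hchains (fun {a b c} => hr)
  refine ⟨M.1, M.2.1, h M.1 M.2.1 M.2.2, ?_⟩
  intro x hxA
  by_contra hx
  push_neg at hx
  have hlt : ∀ y ∈ M.1, x < y := hx
  have hxM : x ∉ M.1 := fun h' => absurd (hlt x h') (lt_irrefl x)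
  have hXwo : WOge (insert x M.1) := by
    intro Y hY hYne
    rcases (Y ∩ M.1).eq_empty_or_nonempty with hemp | hne
    · have hno : ∀ y ∈ Y, y ∉ M.1 := fun y hy hyM => by
        have : y ∈ Y ∩ M.1 := ⟨hy, hyM⟩
        rw [hemp] at this
        exact absurd this (notMem_empty y)
      have hall : ∀ y ∈ Y, y = x := fun y hy => by
        rcases hY hy with h' | h'
        · exact h'
        · exact absurd h' (hno y hy)
      obtain ⟨y₀, hy₀⟩ := hYne
      exact ⟨y₀, hy₀, fun y hy => ((hall y hy).trans (hall y₀ hy₀).symm).le⟩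
    · obtain ⟨m, hm, hmax⟩ := M.2.2 (Y ∩ M.1) inter_subset_right hne
      refine ⟨m, hm.1, fun y hy => ?_⟩
      rcases hY hy with h' | h'
      · exact h' ▸ (hlt m hm.2).le
      · exact hmax y ⟨hy, h'⟩
  have hXA : insert x M.1 ⊆ A := insert_subset hxA M.2.1
  have hMX : r M ⟨insert x M.1, hXA, hXwo⟩ := by
    refine ⟨subset_insert _ _, fun z hz hzM y hy => ?_⟩
    rcases mem_insert_iff.1 hz with rfl | h'
    · exact hlt y hy
    · exact absurd h' hzM
  have := (hM _ hMX).1 (mem_insert x M.1)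
  exact hxM this

lemma countable_of_WOle_arch {R : Type*} [Field R] [LinearOrder R] [IsStrictOrderedRing R] (harch : Archimedean R)
    (W : Set R) (hW : WOle W) : W.Countable := by
  haveI := harch
  have hsucc : ∀ x : R, ∃ q : ℚ, x ∈ W → (∃ y ∈ W, x < y) →
      (x < (q : R) ∧ ∀ y ∈ W, x < y → (q : R) < y) := by
    intro x
    by_cases hx : x ∈ W ∧ ∃ y ∈ W, x < y
    · obtain ⟨hxW, y₀, hy₀, hxy₀⟩ := hx
      obtain ⟨m, hm, hmin⟩ := hW {y ∈ W | x < y} (sep_subset _ _) ⟨y₀, hy₀, hxy₀⟩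
      obtain ⟨q, hq1, hq2⟩ := exists_rat_btwn hm.2
      exact ⟨q, fun _ _ => ⟨hq1, fun y hy hxy => hq2.trans_le (hmin y ⟨hy, hxy⟩)⟩⟩
    · exact ⟨0, fun h1 h2 => absurd ⟨h1, h2⟩ hx⟩
  choose f hf using hsucc
  set W' := {x ∈ W | ∃ y ∈ W, x < y} with hW'def
  have hinj : InjOn f W' := by
    intro a ha b hb hab
    by_contra hne
    rcases lt_or_gt_of_ne hne with h | h
    · have h1 := hf a ha.1 ha.2
      have h2 := hf b hb.1 hb.2
      have : (f a : R) < (f b : R) := (h1.2 b hb.1 h).trans h2.1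
      rw [hab] at this
      exact lt_irrefl _ this
    · have h1 := hf a ha.1 ha.2
      have h2 := hf b hb.1 hb.2
      have : (f b : R) < (f a : R) := (h2.2 a ha.1 h).trans h1.1
      rw [hab] at this
      exact lt_irrefl _ this
  have hW'c : W'.Countable :=
    countable_of_injective_of_countable_image hinj ((f '' W').to_countable)
  have hsub : (W \ W').Subsingleton := by
    intro a ha b hb
    by_contra hne
    rcases lt_or_gt_of_ne hne with h | h
    · exact ha.2 ⟨ha.1, b, hb.1, h⟩
    · exact hb.2 ⟨hb.1, a, ha.1, h⟩
  have : W ⊆ W' ∪ (W \ W') := fun x hx => by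
    by_cases h : x ∈ W'
    · exact Or.inl h
    · exact Or.inr ⟨hx, h⟩
  exact (hW'c.union hsub.countable).mono this

end ShortAux

open ShortAux Set

section Main

variable {K R Γ : Type*}
    [Field K] [LinearOrder K] [IsStrictOrderedRing K] [Field R] [LinearOrder R] [IsStrictOrderedRing R]
    [AddCommGroup Γ] [LinearOrder Γ] [IsOrderedAddMonoid Γ]
    (O : ValuationSubring K)
    (hconvex : ∀ x y : K, 0 ≤ x → x ≤ y → y ∈ O → x ∈ O)
    (π : O →+* R) (hπsurj : Function.Surjective π) (hπmono : Monotone π)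
    (v : K → Γ)
    (hvmul : ∀ a b : K, a ≠ 0 → b ≠ 0 → v (a * b) = v a + v b)
    (hvsurj : ∀ γ : Γ, ∃ a : K, a ≠ 0 ∧ v a = γ)
    (hvO : ∀ a : K, a ≠ 0 → (0 ≤ v a ↔ a ∈ O))

include hvmul in
lemma v_one : v 1 = 0 := by
  have h := hvmul 1 1 one_ne_zero one_ne_zero
  rw [mul_one] at h
  exact (left_eq_add.mp h)

include hvmul in
lemma v_inv (a : K) (ha : a ≠ 0) : v a⁻¹ = - v a := by
  have h := hvmul a a⁻¹ ha (inv_ne_zero ha)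
  rw [mul_inv_cancel₀ ha, v_one v hvmul] at h
  have h' : v a + v a⁻¹ = 0 := h.symm
  exact eq_neg_of_add_eq_zero_right h'

include hvmul in
lemma v_neg (a : K) (ha : a ≠ 0) : v (-a) = v a := by
  have hm1 : v (-1 : K) = 0 := by
    have h := hvmul (-1) (-1) (by norm_num) (by norm_num)
    rw [neg_mul_neg, mul_one, v_one v hvmul] at h
    by_contra hne
    rcases lt_or_gt_of_ne hne with hlt | hgt
    · have : v (-1 : K) + v (-1 : K) < 0 := add_neg hlt hlt
      rw [← h] at this; exact lt_irrefl _ this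
    · have : 0 < v (-1 : K) + v (-1 : K) := add_pos hgt hgt
      rw [← h] at this; exact lt_irrefl _ this
  have h := hvmul (-1) a (by norm_num) ha
  rw [neg_one_mul, hm1, zero_add] at h
  exact h

include hconvex hvmul hvO in
lemma v_anti (a b : K) (ha : 0 < a) (hab : a ≤ b) : v b ≤ v a := by
  have hb : 0 < b := ha.trans_le hab
  have hmem : a / b ∈ O := hconvex (a / b) 1 (by positivity) ((div_le_one hb).2 hab) (one_mem O)
  have hne : a / b ≠ 0 := div_ne_zero ha.ne' hb.ne'
  have h0 : 0 ≤ v (a / b) := (hvO _ hne).2 hmem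
  have hv : v (a / b) = v a + - v b := by
    rw [div_eq_mul_inv, hvmul a b⁻¹ ha.ne' (inv_ne_zero hb.ne'), v_inv v hvmul b hb.ne']
  rw [hv, ← sub_eq_add_neg] at h0
  exact sub_nonneg.mp h0

include hconvex hvmul hvO in
lemma v_two : v (2 : K) = 0 := by
  have h1 : v (2 : K) ≤ 0 := by
    have := v_anti O hconvex v hvmul hvO 1 2 one_pos one_le_two
    rwa [v_one v hvmul] at this
  have h2 : (0 : Γ) ≤ v 2 := by
    refine (hvO 2 two_ne_zero).2 ?_
    have : (2 : K) = 1 + 1 := by norm_num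
    rw [this]; exact add_mem (one_mem O) (one_mem O)
  exact le_antisymm h1 h2

include hconvex hvmul hvO in
lemma v_add_min (x y : K) (hx : 0 < x) (hy : 0 < y) : v (x + y) = min (v x) (v y) := by
  have hxy : 0 < x + y := add_pos hx hy
  have hle1 : v (x + y) ≤ v x :=
    v_anti O hconvex v hvmul hvO x (x + y) hx (le_add_of_nonneg_right hy.le)
  have hle2 : v (x + y) ≤ v y :=
    v_anti O hconvex v hvmul hvO y (x + y) hy (le_add_of_nonneg_left hx.le)
  have hm : 0 < max x y := lt_max_of_lt_left hx
  have hsum : x + y ≤ 2 * max x y := by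
    have := add_le_add (le_max_left x y) (le_max_right x y)
    linarith [this]
  have hge : v (2 * max x y) ≤ v (x + y) :=
    v_anti O hconvex v hvmul hvO (x + y) (2 * max x y) hxy hsum
  have hveq : v (2 * max x y) = v (max x y) := by
    rw [hvmul 2 (max x y) two_ne_zero hm.ne', v_two O hconvex v hvmul hvO, zero_add]
  have hminle : min (v x) (v y) ≤ v (max x y) := by
    rcases le_total x y with h | h
    · rw [max_eq_right h]; exact min_le_right _ _
    · rw [max_eq_left h]; exact min_le_left _ _
  refine le_antisymm (le_min hle1 hle2) ?_
  calc min (v x) (v y) ≤ v (max x y) := hminle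
    _ = v (2 * max x y) := hveq.symm
    _ ≤ v (x + y) := hge

include hπsurj hvmul hvO in
lemma v_pos_of_pi_zero (x : K) (hne : x ≠ 0) (hx : x ∈ O) (h0 : π ⟨x, hx⟩ = 0) :
    0 < v x := by
  have hker : (⟨x, hx⟩ : O) ∈ RingHom.ker π := by
    rw [RingHom.mem_ker]; exact h0
  have hmax : (RingHom.ker π).IsMaximal := RingHom.ker_isMaximal_of_surjective π hπsurj
  have heq : RingHom.ker π = IsLocalRing.maximalIdeal O := IsLocalRing.eq_maximalIdeal hmax
  rw [heq, IsLocalRing.mem_maximalIdeal, mem_nonunits_iff] at hker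
  have hge : 0 ≤ v x := (hvO x hne).2 hx
  rcases hge.lt_or_eq with h | h
  · exact h
  · exfalso
    apply hker
    have hinvmem : x⁻¹ ∈ O := by
      refine (hvO x⁻¹ (inv_ne_zero hne)).1 ?_
      rw [v_inv v hvmul x hne, ← h, neg_zero]
    refine isUnit_iff_exists_inv.2 ⟨⟨x⁻¹, hinvmem⟩, ?_⟩
    ext
    push_cast
    exact mul_inv_cancel₀ hne

include hconvex hπsurj hπmono hvmul hvsurj hvO in
lemma no_uncountable_WOle (harch : Archimedean R) (hΓ : IsShort Γ)
    (S : Set K) (hwo : WOle S) : S.Countable := by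
  classical
  by_contra hunc
  obtain ⟨T, hTS, hTunc, hTwo, hTseg⟩ := trim_le S hwo hunc
  have hd_min : ∀ a b c : K, a < b → b < c → v (c - a) = min (v (b - a)) (v (c - b)) := by
    intro a b c hab hbc
    have h1 : (0:K) < b - a := sub_pos.2 hab
    have h2 : (0:K) < c - b := sub_pos.2 hbc
    have hsum : c - a = (b - a) + (c - b) := by ring
    rw [hsum, v_add_min O hconvex v hvmul hvO (b - a) (c - b) h1 h2]
  have hd_mono : ∀ a b c : K, a < b → b ≤ c → v (c - a) ≤ v (b - a) := by
    intro a b c hab hbc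
    rcases eq_or_lt_of_le hbc with rfl | h
    · exact le_rfl
    · rw [hd_min a b c hab h]; exact min_le_left _ _
  have hDwo : ∀ a ∈ T, WOge {γ : Γ | ∃ b ∈ T, a < b ∧ v (b - a) = γ} := by
    intro a ha Y hY hYne
    obtain ⟨γ₀, hγ₀⟩ := hYne
    obtain ⟨b₀, hb₀T, hab₀, hdb₀⟩ := hY hγ₀
    obtain ⟨m, hm, hmin⟩ := hTwo {b ∈ T | a < b ∧ v (b - a) ∈ Y} (fun b hb => hb.1)
      ⟨b₀, hb₀T, hab₀, hdb₀ ▸ hγ₀⟩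
    refine ⟨v (m - a), hm.2.2, fun γ hγ => ?_⟩
    obtain ⟨b, hbT, hab, hdb⟩ := hY hγ
    have hmb : m ≤ b := hmin b ⟨hbT, hab, hdb ▸ hγ⟩
    calc γ = v (b - a) := hdb.symm
      _ ≤ v (m - a) := hd_mono a m b hm.2.1 hmb
  have hDc : ∀ a ∈ T, {γ : Γ | ∃ b ∈ T, a < b ∧ v (b - a) = γ}.Countable :=
    fun a ha => countable_of_WOge_of_short hΓ _ (hDwo a ha)
  have hzex : ∀ a : K, ∃ zz : K, a ∈ T →
      (zz ∈ T ∧ a < zz ∧ ∀ b ∈ T, a < b → v (zz - a) ≤ v (b - a)) := by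
    intro a
    by_cases ha : a ∈ T
    · have hrepex : ∀ γ : Γ, ∃ b : K, γ ∈ {γ : Γ | ∃ b ∈ T, a < b ∧ v (b - a) = γ} →
          (b ∈ T ∧ a < b ∧ v (b - a) = γ) := by
        intro γ
        by_cases hγ : γ ∈ {γ : Γ | ∃ b ∈ T, a < b ∧ v (b - a) = γ}
        · obtain ⟨b, hb1, hb2, hb3⟩ := hγ
          exact ⟨b, fun _ => ⟨hb1, hb2, hb3⟩⟩
        · exact ⟨a, fun h => absurd h hγ⟩
      choose rep hrep using hrepex
      have hCc : (insert a (rep '' {γ : Γ | ∃ b ∈ T, a < b ∧ v (b - a) = γ})).Countable :=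
        ((hDc a ha).image rep).insert a
      have hCT : insert a (rep '' {γ : Γ | ∃ b ∈ T, a < b ∧ v (b - a) = γ}) ⊆ T := by
        rintro x (rfl | ⟨γ, hγ, rfl⟩)
        · exact ha
        · exact (hrep γ hγ).1
      obtain ⟨zz, hzT, hz⟩ := exists_bound_le T hTseg hTunc hCc hCT
      refine ⟨zz, fun _ => ⟨hzT, hz a (mem_insert _ _), fun b hbT hab => ?_⟩⟩
      have hmem : v (b - a) ∈ {γ : Γ | ∃ b ∈ T, a < b ∧ v (b - a) = γ} := ⟨b, hbT, hab, rfl⟩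
      have h1 := hrep _ hmem
      have hrz : rep (v (b - a)) < zz := hz _ (mem_insert_of_mem _ ⟨_, hmem, rfl⟩)
      calc v (zz - a) ≤ v (rep (v (b - a)) - a) := hd_mono a (rep (v (b - a))) zz h1.2.1 hrz.le
        _ = v (b - a) := h1.2.2
    · exact ⟨a, fun h => absurd h ha⟩
  choose z hzspec using hzex
  have hzT : ∀ a ∈ T, z a ∈ T := fun a ha => (hzspec a ha).1
  have hazlt : ∀ a ∈ T, a < z a := fun a ha => (hzspec a ha).2.1
  set g : K → Γ := fun a => v (z a - a) with hgdef
  have hg_le : ∀ a ∈ T, ∀ b ∈ T, a < b → g a ≤ v (b - a) := fun a ha b hb hab =>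
    (hzspec a ha).2.2 b hb hab
  have hg_eq : ∀ a ∈ T, ∀ b ∈ T, z a ≤ b → v (b - a) = g a := by
    intro a ha b hb hzb
    have hab : a < b := (hazlt a ha).trans_le hzb
    exact le_antisymm (hd_mono a (z a) b (hazlt a ha) hzb) (hg_le a ha b hb hab)
  have hg_mono : ∀ a ∈ T, ∀ a' ∈ T, a ≤ a' → g a ≤ g a' := by
    intro a ha a' ha' haa
    rcases eq_or_lt_of_le haa with rfl | hlt
    · exact le_rfl
    have hCc : ({z a, z a'} : Set K).Countable := (countable_singleton (z a')).insert (z a)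
    have hCT : ({z a, z a'} : Set K) ⊆ T := by
      rintro x (rfl | rfl)
      · exact hzT a ha
      · exact hzT a' ha'
    obtain ⟨b, hbT, hball⟩ := exists_bound_le T hTseg hTunc hCc hCT
    have hz1 : z a < b := hball (z a) (mem_insert _ _)
    have hz2 : z a' < b := hball (z a') (mem_insert_of_mem _ rfl)
    have ha'b : a' < b := (hazlt a' ha').trans hz2
    calc g a = v (b - a) := (hg_eq a ha b hbT hz1.le).symm
      _ = min (v (a' - a)) (v (b - a')) := hd_min a a' b hlt ha'b
      _ ≤ v (b - a') := min_le_right _ _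
      _ = g a' := hg_eq a' ha' b hbT hz2.le
  have hGwo : WOle (g '' T) := by
    intro Y hY hYne
    obtain ⟨γ₀, hγ₀⟩ := hYne
    obtain ⟨a₁, ha₁T, ha₁g⟩ := hY hγ₀
    obtain ⟨m, hm, hmin⟩ := hTwo {a ∈ T | g a ∈ Y} (fun a ha => ha.1)
      ⟨a₁, ha₁T, ha₁g ▸ hγ₀⟩
    refine ⟨g m, hm.2, fun γ hγ => ?_⟩
    obtain ⟨a, haT, hag⟩ := hY hγ
    exact hag ▸ hg_mono m hm.1 a haT (hmin a ⟨haT, hag ▸ hγ⟩)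
  have hfib : ∃ γ₀ ∈ g '' T, ¬ {a ∈ T | g a = γ₀}.Countable := by
    by_contra hall
    push_neg at hall
    apply hTunc
    have hsub : T ⊆ ⋃ γ ∈ g '' T, {a ∈ T | g a = γ} := fun a ha =>
      mem_biUnion ⟨a, ha, rfl⟩ ⟨ha, rfl⟩
    exact ((countable_of_WOle_of_short hΓ _ hGwo).biUnion hall).mono hsub
  obtain ⟨γ₀, hγ₀G, hUunc⟩ := hfib
  obtain ⟨c₀, hc₀ne, hc₀v⟩ := hvsurj γ₀
  obtain ⟨c, hcpos, hcv⟩ : ∃ c : K, 0 < c ∧ v c = γ₀ := by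
    rcases hc₀ne.lt_or_gt with h | h
    · exact ⟨-c₀, neg_pos.2 h, by rw [v_neg v hvmul c₀ hc₀ne, hc₀v]⟩
    · exact ⟨c₀, h, hc₀v⟩
  have hUne : {a ∈ T | g a = γ₀}.Nonempty := by
    rcases ({a ∈ T | g a = γ₀} : Set K).eq_empty_or_nonempty with hemp | h
    · rw [hemp] at hUunc; exact absurd countable_empty hUunc
    · exact h
  obtain ⟨a₀, ha₀U, ha₀min⟩ := hTwo {a ∈ T | g a = γ₀} (fun a ha => ha.1) hUne
  have hkey : ∀ a : K, a ∈ T → g a = γ₀ → a₀ < a → (a - a₀) / c ∈ O := by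
    intro a haT hag hlt
    have h1 : γ₀ ≤ v (a - a₀) := by
      have := hg_le a₀ ha₀U.1 a haT hlt
      rwa [ha₀U.2] at this
    have hne : (a - a₀) / c ≠ 0 := div_ne_zero (sub_ne_zero.2 hlt.ne') hcpos.ne'
    refine (hvO _ hne).1 ?_
    have hv : v ((a - a₀)/c) = v (a - a₀) + - v c := by
      rw [div_eq_mul_inv, hvmul _ _ (sub_ne_zero.2 hlt.ne') (inv_ne_zero hcpos.ne'),
        v_inv v hvmul c hcpos.ne']
    rw [hv, hcv, ← sub_eq_add_neg]
    exact sub_nonneg.2 h1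
  have hU'unc : ¬ {a ∈ T | g a = γ₀ ∧ a₀ < a}.Countable := by
    intro hc'
    apply hUunc
    have hsub : {a ∈ T | g a = γ₀} ⊆ {a ∈ T | g a = γ₀ ∧ a₀ < a} ∪ {a₀} := by
      intro a ha
      rcases eq_or_lt_of_le (ha₀min a ha) with h | h
      · exact Or.inr (mem_singleton_iff.2 h.symm)
      · exact Or.inl ⟨ha.1, ha.2, h⟩
    exact ((hc'.union (countable_singleton a₀)).mono hsub)
  set φ : K → R := fun x => if h : (x - a₀)/c ∈ O then π ⟨(x - a₀)/c, h⟩ else 0 with hφdef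
  have hφmono : ∀ a : K, a ∈ T → g a = γ₀ → a₀ < a → ∀ b : K, b ∈ T → g b = γ₀ → a₀ < b →
      a ≤ b → φ a ≤ φ b := by
    intro a haT hag halt b hbT hbg hblt hab
    have hma := hkey a haT hag halt
    have hmb := hkey b hbT hbg hblt
    simp only [hφdef, dif_pos hma, dif_pos hmb]
    apply hπmono
    show ((⟨(a - a₀)/c, hma⟩ : O)) ≤ ⟨(b - a₀)/c, hmb⟩
    rw [Subtype.mk_le_mk, div_eq_mul_inv, div_eq_mul_inv]
    exact mul_le_mul_of_nonneg_right (sub_le_sub_right hab a₀) (inv_nonneg.2 hcpos.le)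
  have hWwo : WOle (φ '' {a ∈ T | g a = γ₀ ∧ a₀ < a}) := by
    intro Y hY hYne
    obtain ⟨r₁, hr₁⟩ := hYne
    obtain ⟨b₀, hb₀, hφb₀⟩ := hY hr₁
    obtain ⟨m, hm, hmin⟩ := hTwo {a ∈ T | (g a = γ₀ ∧ a₀ < a) ∧ φ a ∈ Y} (fun a ha => ha.1)
      ⟨b₀, hb₀.1, ⟨hb₀.2, hφb₀ ▸ hr₁⟩⟩
    refine ⟨φ m, hm.2.2, fun r hr => ?_⟩
    obtain ⟨b, hb, hφb⟩ := hY hr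
    have hmb : m ≤ b := hmin b ⟨hb.1, hb.2, hφb ▸ hr⟩
    calc r = φ b := hφb.symm
      _ ≥ φ m := hφmono m hm.1 hm.2.1.1 hm.2.1.2 b hb.1 hb.2.1 hb.2.2 hmb
  have hWc := countable_of_WOle_arch harch _ hWwo
  have hfib2 : ∃ r₀ ∈ φ '' {a ∈ T | g a = γ₀ ∧ a₀ < a},
      ¬ {a ∈ T | (g a = γ₀ ∧ a₀ < a) ∧ φ a = r₀}.Countable := by
    by_contra hall
    push_neg at hall
    apply hU'unc
    have hsub : {a ∈ T | g a = γ₀ ∧ a₀ < a} ⊆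
        ⋃ r ∈ φ '' {a ∈ T | g a = γ₀ ∧ a₀ < a}, {a ∈ T | (g a = γ₀ ∧ a₀ < a) ∧ φ a = r} :=
      fun a ha => mem_biUnion ⟨a, ha, rfl⟩ ⟨ha.1, ha.2, rfl⟩
    exact (hWc.biUnion hall).mono hsub
  obtain ⟨r₀, hr₀W, hVunc⟩ := hfib2
  have hVne : {a ∈ T | (g a = γ₀ ∧ a₀ < a) ∧ φ a = r₀}.Nonempty := by
    rcases ({a ∈ T | (g a = γ₀ ∧ a₀ < a) ∧ φ a = r₀} : Set K).eq_empty_or_nonempty with hemp | h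
    · rw [hemp] at hVunc; exact absurd countable_empty hVunc
    · exact h
  obtain ⟨a, haV⟩ := hVne
  have haT : a ∈ T := haV.1
  have hbex : ∃ b ∈ {a ∈ T | (g a = γ₀ ∧ a₀ < a) ∧ φ a = r₀}, ¬ b < z a := by
    by_contra hall
    push_neg at hall
    apply hVunc
    have hsub : {x ∈ T | (g x = γ₀ ∧ a₀ < x) ∧ φ x = r₀} ⊆ {y ∈ T | y < z a} :=
      fun x hx => ⟨hx.1, hall x hx⟩
    exact (hTseg (z a) (hzT a haT)).mono hsub
  obtain ⟨b, hbV, hbz⟩ := hbex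
  have hzab : z a ≤ b := not_lt.1 hbz
  have hab : a < b := (hazlt a haT).trans_le hzab
  have hbT : b ∈ T := hbV.1
  have hdab : v (b - a) = γ₀ := by
    have := hg_eq a haT b hbT hzab
    rwa [haV.2.1.1] at this
  have hma := hkey a haT haV.2.1.1 haV.2.1.2
  have hmb := hkey b hbT hbV.2.1.1 hbV.2.1.2
  have hφa : φ a = π ⟨(a - a₀)/c, hma⟩ := by simp only [hφdef, dif_pos hma]
  have hφb : φ b = π ⟨(b - a₀)/c, hmb⟩ := by simp only [hφdef, dif_pos hmb]
  have hφeq : π (⟨(b - a₀)/c, hmb⟩ - ⟨(a - a₀)/c, hma⟩ : O) = 0 := by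
    rw [map_sub, ← hφa, ← hφb, haV.2.2, hbV.2.2, sub_self]
  have hecoe : ((⟨(b - a₀)/c, hmb⟩ - ⟨(a - a₀)/c, hma⟩ : O) : K) = (b - a)/c := by
    push_cast
    ring
  have hmemba : (b - a)/c ∈ O := hecoe ▸ (⟨(b - a₀)/c, hmb⟩ - ⟨(a - a₀)/c, hma⟩ : O).2
  have hπ0 : π ⟨(b - a)/c, hmemba⟩ = 0 := by
    have heq : (⟨(b - a)/c, hmemba⟩ : O) = ⟨(b - a₀)/c, hmb⟩ - ⟨(a - a₀)/c, hma⟩ :=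
      Subtype.ext hecoe.symm
    rw [heq]
    exact hφeq
  have hvpos : 0 < v ((b - a)/c) :=
    v_pos_of_pi_zero O π hπsurj v hvmul hvO _
      (div_ne_zero (sub_ne_zero.2 hab.ne') hcpos.ne') hmemba hπ0
  have hveq : v ((b - a)/c) = v (b - a) + - v c := by
    rw [div_eq_mul_inv, hvmul _ _ (sub_ne_zero.2 hab.ne') (inv_ne_zero hcpos.ne'),
      v_inv v hvmul c hcpos.ne']
  rw [hveq, hcv, hdab] at hvpos
  simp at hvpos

include hconvex hπsurj hπmono hvmul hvsurj hvO in
lemma no_uncountable_WOge (harch : Archimedean R) (hΓ : IsShort Γ)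
    (S : Set K) (hwo : WOge S) : S.Countable := by
  have hN : WOle ((fun x : K => -x) '' S) := by
    intro Y hY hYne
    have hYS : (fun x : K => -x) '' Y ⊆ S := by
      rintro _ ⟨y, hy, rfl⟩
      obtain ⟨s, hs, hsy⟩ := hY hy
      rw [← hsy]
      simpa using hs
    obtain ⟨y₀, hy₀⟩ := hYne
    obtain ⟨m, hm, hmax⟩ := hwo _ hYS ⟨-y₀, ⟨y₀, hy₀, rfl⟩⟩
    obtain ⟨y₁, hy₁Y, hy₁⟩ := hm
    refine ⟨y₁, hy₁Y, fun y hy => ?_⟩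
    have hle : -y ≤ m := hmax (-y) ⟨y, hy, rfl⟩
    rw [← hy₁] at hle
    exact neg_le_neg_iff.1 hle
  have hNc := no_uncountable_WOle O hconvex π hπsurj hπmono v hvmul hvsurj hvO harch hΓ _ hN
  have hsub : S ⊆ (fun x : K => -x) '' ((fun x : K => -x) '' S) := fun s hs =>
    ⟨-s, ⟨s, hs, rfl⟩, neg_neg s⟩
  exact ((hNc.image _)).mono hsub

end Main

/-- Let `K` be a linearly ordered field with a convex valuation ring `O` whose
ordered residue field `R := O/m` (realized as any linearly ordered field `R` together with a
monotone surjective ring homomorphism `π : O →+* R`; as `O` is local this forces `ker π = m` and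
the order on `R` to be the induced one) is archimedean.  Then `K` is short iff the value group
`Γ := K×/O×` (realized as any linearly ordered abelian group `Γ` together with a map `v : K → Γ`,
surjective on `K×`, additive on products of nonzero elements, with `v a ≥ 0 ↔ a ∈ O` for
`a ≠ 0`) is short. -/
theorem short_iff_valueGroup_short_of_archimedean_residueField {K R Γ : Type*}
    [Field K] [LinearOrder K] [IsStrictOrderedRing K] [Field R] [LinearOrder R] [IsStrictOrderedRing R]
    [AddCommGroup Γ] [LinearOrder Γ] [IsOrderedAddMonoid Γ]
    (O : ValuationSubring K)
    (hconvex : ∀ x y : K, 0 ≤ x → x ≤ y → y ∈ O → x ∈ O)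
    (π : O →+* R) (hπsurj : Function.Surjective π) (hπmono : Monotone π)
    (harch : Archimedean R)
    (v : K → Γ)
    (hvmul : ∀ a b : K, a ≠ 0 → b ≠ 0 → v (a * b) = v a + v b)
    (hvsurj : ∀ γ : Γ, ∃ a : K, a ≠ 0 ∧ v a = γ)
    (hvO : ∀ a : K, a ≠ 0 → (0 ≤ v a ↔ a ∈ O)) :
    IsShort K ↔ IsShort Γ := by
  constructor
  · intro hK
    have hpick : ∀ γ : Γ, ∃ a : K, 0 < a ∧ v a = γ := by
      intro γ
      obtain ⟨a, ha, hva⟩ := hvsurj γ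
      rcases ha.lt_or_gt with h | h
      · exact ⟨-a, neg_pos.2 h, by rw [v_neg v hvmul a ha, hva]⟩
      · exact ⟨a, h, hva⟩
    choose p hp1 hp2 using hpick
    intro G
    obtain ⟨⟨B₁, hB₁A, hB₁c, hB₁cof⟩, ⟨B₂, hB₂A, hB₂c, hB₂coi⟩⟩ := hK (p '' G)
    constructor
    · refine ⟨v '' B₂, ?_, hB₂c.image v, ?_⟩
      · rintro _ ⟨b, hb, rfl⟩
        obtain ⟨γ', hγ', rfl⟩ := hB₂A hb
        rw [hp2]
        exact hγ'
      · intro γ hγ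
        obtain ⟨b, hbB, hble⟩ := hB₂coi (p γ) ⟨γ, hγ, rfl⟩
        refine ⟨v b, Set.mem_image_of_mem v hbB, ?_⟩
        have hbpos : 0 < b := by
          obtain ⟨γ', hγ', rfl⟩ := hB₂A hbB
          exact hp1 γ'
        have h := v_anti O hconvex v hvmul hvO b (p γ) hbpos hble
        rwa [hp2] at h
    · refine ⟨v '' B₁, ?_, hB₁c.image v, ?_⟩
      · rintro _ ⟨b, hb, rfl⟩
        obtain ⟨γ', hγ', rfl⟩ := hB₁A hb
        rw [hp2]
        exact hγ'
      · intro γ hγ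
        obtain ⟨b, hbB, hble⟩ := hB₁cof (p γ) ⟨γ, hγ, rfl⟩
        refine ⟨v b, Set.mem_image_of_mem v hbB, ?_⟩
        have h := v_anti O hconvex v hvmul hvO (p γ) b (hp1 γ) hble
        rwa [hp2] at h
  · intro hΓ
    intro A
    constructor
    · exact exists_countable_cofinal A (fun X _ hwo =>
        no_uncountable_WOle O hconvex π hπsurj hπmono v hvmul hvsurj hvO harch hΓ X hwo)
    · exact exists_countable_coinitial A (fun X _ hwo =>
        no_uncountable_WOge O hconvex π hπsurj hπmono v hvmul hvsurj hvO harch hΓ X hwo)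
end

section
/- A linearly ordered abelian group Γ is short if and only if its linearly ordered set [Γ] of archimedean classes of nonzero elements is short, where for nonzero α, β ∈ Γ one sets [α] ≤ [β] iff |α| ≤ n|β| for some positive integer n, and [α] = [β] iff [α] ≤ [β] and [β] ≤ [α]. -/
namespace ShortAux

noncomputable section

open Set Cardinal Ordinal

/-- The canonical uncountable well-order `ω₁`. -/
abbrev O1 : Type := (Cardinal.aleph 1).ord.ToType

lemma countable_Iio (ξ : O1) : (Set.Iio ξ).Countable := by
  rw [Cardinal.countable_iff_lt_aleph_one]
  exact Cardinal.mk_Iio_ord_toType ξ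

lemma countable_Iic (ξ : O1) : (Set.Iic ξ).Countable := by
  refine ((countable_Iio ξ).insert ξ).mono ?_
  intro y hy
  rcases eq_or_lt_of_le (Set.mem_Iic.mp hy) with rfl | h
  · exact Set.mem_insert _ _
  · exact Set.mem_insert_of_mem _ h

lemma bounded_of_countable {s : Set O1} (hs : s.Countable) : ∃ ξ : O1, ∀ x ∈ s, x < ξ := by
  by_contra hcon
  push_neg at hcon
  have huniv : (Set.univ : Set O1) = ⋃ x ∈ s, Set.Iic x := by
    ext ξ
    simp only [Set.mem_univ, true_iff, Set.mem_iUnion]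
    obtain ⟨x, hx, hle⟩ := hcon ξ
    exact ⟨x, hx, hle⟩
  have hcnt : (Set.univ : Set O1).Countable := by
    rw [huniv]
    exact hs.biUnion fun x _ => countable_Iic x
  have h1 : Countable O1 := Set.countable_univ_iff.1 hcnt
  have h2 : #O1 ≤ Cardinal.aleph0 := Cardinal.mk_le_aleph0
  rw [Cardinal.mk_ord_toType] at h2
  exact absurd h2 (not_le.2 Cardinal.aleph0_lt_aleph_one)

lemma exists_gt (ξ : O1) : ∃ η : O1, ξ < η := by
  obtain ⟨η, hη⟩ := bounded_of_countable (Set.countable_singleton ξ)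
  exact ⟨η, hη ξ rfl⟩

/-- If a set has no countable cofinal subset, there is a strictly monotone `ω₁`-chain. -/
lemma exists_strictMono {α : Type*} [LinearOrder α] {A : Set α}
    (h : ∀ B ⊆ A, B.Countable → ∃ x ∈ A, ∀ y ∈ B, ¬ x ≤ y) :
    ∃ f : O1 → α, StrictMono f := by
  classical
  have wf : WellFounded ((· < ·) : O1 → O1 → Prop) := IsWellFounded.wf
  have hB : ∀ (ξ : O1) (rec : ∀ η : O1, η < ξ → α),
      ({y | ∃ η, ∃ hη : η < ξ, rec η hη = y} ∩ A).Countable := by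
    intro ξ rec
    refine Set.Countable.mono Set.inter_subset_left ?_
    have he : {y | ∃ η, ∃ hη : η < ξ, rec η hη = y}
        = Set.range (fun p : Set.Iio ξ => rec p.1 p.2) := by
      ext y
      constructor
      · rintro ⟨η, hη, rfl⟩; exact ⟨⟨η, hη⟩, rfl⟩
      · rintro ⟨⟨η, hη⟩, rfl⟩; exact ⟨η, hη, rfl⟩
    rw [he]
    have := (countable_Iio ξ).to_subtype
    exact Set.countable_range _
  set F : ∀ ξ : O1, (∀ η : O1, η < ξ → α) → α := fun ξ rec =>
    Classical.choose (h _ Set.inter_subset_right (hB ξ rec)) with hFdef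
  set f : O1 → α := wf.fix F with hfdef
  have key : ∀ ξ, f ξ = F ξ (fun η _ => f η) := fun ξ => wf.fix_eq F ξ
  have main : ∀ ξ : O1, f ξ ∈ A ∧ ∀ η, η < ξ → f η < f ξ := by
    intro ξ
    induction ξ using wf.induction with
    | _ ξ ih =>
      have spec := Classical.choose_spec (h _ Set.inter_subset_right (hB ξ (fun η _ => f η)))
      obtain ⟨hmem, hgt⟩ := spec
      rw [key ξ]
      exact ⟨hmem, fun η hη =>
        lt_of_not_ge (hgt (f η) ⟨⟨η, hη, rfl⟩, (ih η hη).1⟩)⟩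
  exact ⟨f, fun η ξ hlt => (main ξ).2 η hlt⟩

/-- If a set has no countable coinitial subset, there is a strictly antitone `ω₁`-chain. -/
lemma exists_strictAnti {α : Type*} [LinearOrder α] {A : Set α}
    (h : ∀ B ⊆ A, B.Countable → ∃ x ∈ A, ∀ y ∈ B, ¬ y ≤ x) :
    ∃ f : O1 → α, StrictAnti f := by
  have h' : ∀ B ⊆ (OrderDual.ofDual ⁻¹' A : Set αᵒᵈ), B.Countable →
      ∃ x ∈ (OrderDual.ofDual ⁻¹' A : Set αᵒᵈ), ∀ y ∈ B, ¬ x ≤ y := by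
    intro B hB hBc
    obtain ⟨x, hx, hx2⟩ := h (OrderDual.ofDual '' B)
      (by rintro _ ⟨y, hy, rfl⟩; exact hB hy) (hBc.image _)
    refine ⟨OrderDual.toDual x, hx, fun y hy hle => ?_⟩
    exact hx2 (OrderDual.ofDual y) ⟨y, hy, rfl⟩ hle
  obtain ⟨f, hf⟩ := exists_strictMono (α := αᵒᵈ) h'
  exact ⟨fun ξ => OrderDual.ofDual (f ξ), fun ξ η hlt => hf hlt⟩

/-- A monotone function from `ω₁` to a linear order all of whose subsets have countable
cofinality is eventually constant. -/
lemma mono_eventually_const {β : Type*} [LinearOrder β]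
    (hshort : ∀ A : Set β, ∃ B ⊆ A, B.Countable ∧ ∀ x ∈ A, ∃ y ∈ B, x ≤ y)
    (g : O1 → β) (hg : Monotone g) : ∃ ξ : O1, ∀ η, ξ ≤ η → g η = g ξ := by
  obtain ⟨B, hBsub, hBc, hBcof⟩ := hshort (Set.range g)
  have hpre : ∀ b : B, ∃ ξ, g ξ = (b : β) := fun b => hBsub b.2
  choose pre hpre using hpre
  have hc : (Set.range pre).Countable := by
    have := hBc.to_subtype
    exact Set.countable_range _
  obtain ⟨ξ₀, hξ₀⟩ := bounded_of_countable hc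
  have hub : ∀ η, g η ≤ g ξ₀ := by
    intro η
    obtain ⟨b, hbB, hle⟩ := hBcof (g η) ⟨η, rfl⟩
    calc g η ≤ b := hle
    _ = g (pre ⟨b, hbB⟩) := (hpre ⟨b, hbB⟩).symm
    _ ≤ g ξ₀ := hg (le_of_lt (hξ₀ _ ⟨⟨b, hbB⟩, rfl⟩))
  exact ⟨ξ₀, fun η hη => le_antisymm (hub η) (hg hη)⟩

lemma anti_eventually_const {β : Type*} [LinearOrder β]
    (hshort : ∀ A : Set β, ∃ B ⊆ A, B.Countable ∧ ∀ x ∈ A, ∃ y ∈ B, y ≤ x)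
    (g : O1 → β) (hg : Antitone g) : ∃ ξ : O1, ∀ η, ξ ≤ η → g η = g ξ := by
  have := mono_eventually_const (β := βᵒᵈ)
    (fun A => hshort A) (fun ξ => OrderDual.toDual (g ξ)) (fun x y h => hg h)
  obtain ⟨ξ, hξ⟩ := this
  exact ⟨ξ, fun η hη => congrArg OrderDual.ofDual (hξ η hη)⟩

/-- A monotone real-valued function on `ω₁` is eventually constant. -/
lemma real_mono_eventually_const (g : O1 → ℝ) (hg : Monotone g) :
    ∃ ξ : O1, ∀ η, ξ ≤ η → g η = g ξ := by
  by_contra hcon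
  push_neg at hcon
  have step : ∀ ξ : O1, ∃ η, ∃ q : ℚ, g ξ < q ∧ (q : ℝ) < g η := by
    intro ξ
    obtain ⟨η, hle, hne⟩ := hcon ξ
    have hlt : g ξ < g η := lt_of_le_of_ne (hg hle) (Ne.symm hne)
    obtain ⟨q, h1, h2⟩ := exists_rat_btwn hlt
    exact ⟨η, q, h1, h2⟩
  choose nx q hq1 hq2 using step
  have hpre : ∀ s : Set.range q, ∃ ξ, q ξ = (s : ℚ) := fun s => s.2
  choose sel hsel using hpre
  have hc : (Set.range (fun s => nx (sel s))).Countable := by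
    have h1 : (Set.range q).Countable := Set.to_countable _
    have := h1.to_subtype
    exact Set.countable_range _
  obtain ⟨β, hβ⟩ := bounded_of_countable hc
  set s₀ : Set.range q := ⟨q β, ⟨β, rfl⟩⟩ with hs₀
  have h1 : (q (sel s₀) : ℝ) < g (nx (sel s₀)) := hq2 _
  have h2 : g (nx (sel s₀)) ≤ g β := hg (le_of_lt (hβ _ ⟨s₀, rfl⟩))
  have h3 : g β < q β := hq1 β
  have h4 : q (sel s₀) = q β := hsel s₀
  rw [h4] at h1
  exact absurd ((h1.trans_le h2).trans h3) (lt_irrefl _)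

section Group

variable {Γ C : Type*} [AddCommGroup Γ] [LinearOrder Γ] [IsOrderedAddMonoid Γ] [LinearOrder C]
  (cl : {γ : Γ // γ ≠ 0} → C)


lemma cl_le_of_le (hcl : ∀ α β : {γ : Γ // γ ≠ 0},
      cl α ≤ cl β ↔ ∃ n : ℕ, 0 < n ∧ |(α : Γ)| ≤ n • |(β : Γ)|) {a b : {γ : Γ // γ ≠ 0}} (ha : 0 < (a : Γ)) (hb : 0 < (b : Γ))
    (hab : (a : Γ) ≤ (b : Γ)) : cl a ≤ cl b := by
  rw [hcl]
  exact ⟨1, one_pos, by simpa [abs_of_pos ha, abs_of_pos hb, one_nsmul] using hab⟩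

lemma cl_add_aux (hcl : ∀ α β : {γ : Γ // γ ≠ 0},
      cl α ≤ cl β ↔ ∃ n : ℕ, 0 < n ∧ |(α : Γ)| ≤ n • |(β : Γ)|) {a b c : {γ : Γ // γ ≠ 0}} (ha : 0 < (a : Γ)) (hb : 0 < (b : Γ))
    (hc : (c : Γ) = (a : Γ) + (b : Γ)) (hab : cl a ≤ cl b) : cl c = cl b := by
  have hc0 : 0 < (c : Γ) := hc ▸ add_pos ha hb
  apply le_antisymm
  · obtain ⟨n, hn, hle⟩ := (hcl a b).1 hab
    rw [hcl]
    refine ⟨n + 1, Nat.succ_pos n, ?_⟩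
    rw [abs_of_pos hc0, hc, succ_nsmul]
    rw [abs_of_pos ha, abs_of_pos hb] at hle
    rw [abs_of_pos hb]
    exact add_le_add hle le_rfl
  · exact cl_le_of_le cl hcl hb hc0 (by rw [hc]; exact le_add_of_nonneg_left ha.le)

lemma cl_add_eq_max (hcl : ∀ α β : {γ : Γ // γ ≠ 0},
      cl α ≤ cl β ↔ ∃ n : ℕ, 0 < n ∧ |(α : Γ)| ≤ n • |(β : Γ)|) {a b c : {γ : Γ // γ ≠ 0}} (ha : 0 < (a : Γ)) (hb : 0 < (b : Γ))
    (hc : (c : Γ) = (a : Γ) + (b : Γ)) : cl c = max (cl a) (cl b) := by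
  rcases le_total (cl a) (cl b) with h | h
  · rw [max_eq_right h]; exact cl_add_aux cl hcl ha hb hc h
  · rw [max_eq_left h]
    exact cl_add_aux cl hcl hb ha (by rw [hc, add_comm]) h

/-- Key lemma: if `C` is short then there is no strictly monotone `ω₁`-chain in `Γ`. -/
lemma no_strictMono (hcl : ∀ α β : {γ : Γ // γ ≠ 0},
      cl α ≤ cl β ↔ ∃ n : ℕ, 0 < n ∧ |(α : Γ)| ≤ n • |(β : Γ)|) (hC : IsShort C) (f : O1 → Γ) (hf : StrictMono f) : False := by
  classical
  choose nxt hnxt using exists_gt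
  have hd : ∀ ξ η : O1, (0 : Γ) < f (max η (nxt ξ)) - f ξ := fun ξ η =>
    sub_pos.2 (hf ((hnxt ξ).trans_le (le_max_right _ _)))
  set d : O1 → O1 → {γ : Γ // γ ≠ 0} :=
    fun ξ η => ⟨f (max η (nxt ξ)) - f ξ, (hd ξ η).ne'⟩ with hddef
  set D : O1 → O1 → C := fun ξ η => cl (d ξ η) with hDdef
  have hdval : ∀ ξ η : O1, (d ξ η : Γ) = f (max η (nxt ξ)) - f ξ := fun _ _ => rfl
  have keyD : ∀ (ξ η η' : O1), η ≤ η' → D ξ η ≤ D ξ η' := by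
    intro ξ η η' hle
    have h1 : max η (nxt ξ) ≤ max η' (nxt ξ) := max_le_max hle le_rfl
    rcases eq_or_lt_of_le h1 with heq | hlt
    · have : d ξ η = d ξ η' := Subtype.ext (by rw [hdval, hdval, heq])
      simp only [hDdef, this, le_refl]
    · have hpos1 : (0 : Γ) < f (max η' (nxt ξ)) - f (max η (nxt ξ)) := sub_pos.2 (hf hlt)
      have hsum : (d ξ η' : Γ) = (f (max η' (nxt ξ)) - f (max η (nxt ξ))) + (d ξ η : Γ) := by
        rw [hdval, hdval]
        exact (sub_add_sub_cancel _ _ _).symm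
      have heq := cl_add_eq_max cl hcl (a := ⟨_, hpos1.ne'⟩) (b := d ξ η) (c := d ξ η')
        hpos1 (hd ξ η) hsum
      calc D ξ η = cl (d ξ η) := rfl
      _ ≤ max (cl ⟨_, hpos1.ne'⟩) (cl (d ξ η)) := le_max_right _ _
      _ = cl (d ξ η') := heq.symm
      _ = D ξ η' := rfl
  -- stabilization of D ξ · in the second variable
  have hstab : ∀ ξ : O1, ∃ θ, ∀ η, θ ≤ η → D ξ η = D ξ θ := fun ξ =>
    mono_eventually_const (fun A => (hC A).1) (D ξ) (fun η η' h => keyD ξ η η' h)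
  choose θ hθ using hstab
  set c : O1 → C := fun ξ => D ξ (θ ξ) with hcdef
  have hcanti : Antitone c := by
    intro ξ ξ' hle
    rcases eq_or_lt_of_le hle with rfl | hlt
    · exact le_rfl
    · set η := max (max (θ ξ) (θ ξ')) (max (nxt ξ) (nxt ξ')) with hηdef
      have hη1 : θ ξ ≤ η := (le_max_left _ _).trans (le_max_left _ _)
      have hη2 : θ ξ' ≤ η := (le_max_right _ _).trans (le_max_left _ _)
      have hηn : nxt ξ ≤ η := (le_max_left _ _).trans (le_max_right _ _)
      have hηn' : nxt ξ' ≤ η := (le_max_right _ _).trans (le_max_right _ _)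
      have e1 : c ξ' = D ξ' η := (hθ ξ' η hη2).symm
      have e2 : c ξ = D ξ η := (hθ ξ η hη1).symm
      rw [e1, e2]
      have hv' : (d ξ' η : Γ) = f η - f ξ' := by rw [hdval, max_eq_left hηn']
      have hv : (d ξ η : Γ) = f η - f ξ := by rw [hdval, max_eq_left hηn]
      have hpos2 : (0 : Γ) < f ξ' - f ξ := sub_pos.2 (hf hlt)
      have hsum : (d ξ η : Γ) = (d ξ' η : Γ) + (f ξ' - f ξ) := by
        rw [hv, hv']
        exact (sub_add_sub_cancel _ _ _).symm
      have heq := cl_add_eq_max cl hcl (a := d ξ' η) (b := ⟨_, hpos2.ne'⟩) (c := d ξ η)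
        (hd ξ' η) hpos2 hsum
      calc D ξ' η = cl (d ξ' η) := rfl
      _ ≤ max (cl (d ξ' η)) (cl ⟨_, hpos2.ne'⟩) := le_max_left _ _
      _ = cl (d ξ η) := heq.symm
      _ = D ξ η := rfl
  obtain ⟨ξs, hξs⟩ := anti_eventually_const (fun A => (hC A).2) c hcanti
  set v : C := c ξs with hvdef
  set θs : O1 := max (θ ξs) (nxt ξs) with hθsdef
  have hθs1 : θ ξs ≤ θs := le_max_left _ _
  have hθsgt : ξs < θs := (hnxt ξs).trans_le (le_max_right _ _)
  have hupos : (0 : Γ) < f θs - f ξs := sub_pos.2 (hf hθsgt)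
  set u : {γ : Γ // γ ≠ 0} := ⟨f θs - f ξs, hupos.ne'⟩ with hudef
  have hnθ : nxt ξs ≤ θs := le_max_right _ _
  have hu_eq : u = d ξs θs := Subtype.ext (by rw [hdval ξs θs, max_eq_left hnθ])
  have hu_cl : cl u = v := by
    rw [hu_eq]
    show D ξs θs = v
    rw [hθ ξs θs hθs1]
  -- the elements aη
  have hapos : ∀ η : O1, (0 : Γ) < f (max η θs) - f ξs := fun η =>
    sub_pos.2 (hf (hθsgt.trans_le (le_max_right _ _)))
  set a : O1 → {γ : Γ // γ ≠ 0} := fun η => ⟨f (max η θs) - f ξs, (hapos η).ne'⟩ with hadef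
  have haval : ∀ η, (a η : Γ) = f (max η θs) - f ξs := fun _ => rfl
  have ha_cl : ∀ η, cl (a η) = v := by
    intro η
    have hn2 : nxt ξs ≤ max η θs := hnθ.trans (le_max_right η θs)
    have h1 : a η = d ξs (max η θs) := Subtype.ext (by
      rw [haval, hdval, max_eq_left hn2])
    rw [h1]
    show D ξs (max η θs) = v
    rw [hθ ξs _ (hθs1.trans (le_max_right η θs))]
  -- the real-valued function
  set S : O1 → Set ℝ := fun η =>
    {x : ℝ | ∃ m k : ℕ, 0 < k ∧ x = (m : ℝ) / k ∧ m • (u : Γ) ≤ k • (a η : Γ)} with hSdef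
  have hSne : ∀ η, (0 : ℝ) ∈ S η := fun η =>
    ⟨0, 1, one_pos, by norm_num, by rw [zero_nsmul, one_nsmul]; exact (hapos η).le⟩
  have hSbdd : ∀ η, BddAbove (S η) := by
    intro η
    have h1 : cl (a η) ≤ cl u := by rw [ha_cl, hu_cl]
    obtain ⟨N, hN, hle⟩ := (hcl (a η) u).1 h1
    rw [abs_of_pos (hapos η), abs_of_pos hupos] at hle
    refine ⟨N, fun x hx => ?_⟩
    obtain ⟨m, k, hk, rfl, hmk⟩ := hx
    have h2 : m • (u : Γ) ≤ (k * N) • (u : Γ) := by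
      calc m • (u : Γ) ≤ k • (a η : Γ) := hmk
      _ ≤ k • (N • (u : Γ)) := nsmul_le_nsmul_right hle k
      _ = (N * k) • (u : Γ) := (mul_nsmul _ N k).symm
      _ = (k * N) • (u : Γ) := by rw [Nat.mul_comm]
    have h3 : m ≤ k * N := by
      by_contra hcon
      exact absurd h2 (not_le.2 (nsmul_lt_nsmul_left hupos (not_le.1 hcon)))
    rw [div_le_iff₀ (by exact_mod_cast hk)]
    calc (m : ℝ) ≤ ((k * N : ℕ) : ℝ) := by exact_mod_cast h3
    _ = N * k := by push_cast; ring
  set r : O1 → ℝ := fun η => sSup (S η) with hrdef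
  have hrmono : Monotone r := by
    intro η η' hle
    apply csSup_le_csSup (hSbdd η') ⟨0, hSne η⟩
    rintro x ⟨m, k, hk, rfl, hmk⟩
    refine ⟨m, k, hk, rfl, hmk.trans (nsmul_le_nsmul_right ?_ k)⟩
    rw [haval, haval]
    exact sub_le_sub_right (hf.monotone (max_le_max hle le_rfl)) _
  obtain ⟨η₁, hη₁⟩ := real_mono_eventually_const r hrmono
  set η₂ : O1 := max η₁ θs with hη₂def
  set b : O1 := max (θ η₂) (max η₂ (nxt η₂)) with hbdef
  have hbgt : η₂ < b := (hnxt η₂).trans_le ((le_max_right _ _).trans (le_max_right _ _))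
  have hbge : η₂ ≤ b := hbgt.le
  have hwpos : (0 : Γ) < f b - f η₂ := sub_pos.2 (hf hbgt)
  set w : {γ : Γ // γ ≠ 0} := ⟨f b - f η₂, hwpos.ne'⟩ with hwdef
  have hnb : nxt η₂ ≤ b := (le_max_right η₂ (nxt η₂)).trans (le_max_right (θ η₂) _)
  have hw_eq : w = d η₂ b := Subtype.ext (by
    rw [hdval η₂ b, max_eq_left hnb])
  have hξsle : ξs ≤ η₂ := (hθsgt.le).trans (le_max_right η₁ θs)
  have hw_cl : cl w = v := by
    rw [hw_eq]
    show D η₂ b = v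
    rw [hθ η₂ b (le_max_left _ _)]
    show c η₂ = v
    rw [hξs η₂ hξsle]
  obtain ⟨M, hM, hMle⟩ := (hcl u w).1 (by rw [hu_cl, hw_cl])
  rw [abs_of_pos hupos, abs_of_pos hwpos] at hMle
  have hθsη₂ : θs ≤ η₂ := le_max_right η₁ θs
  have hmaxη₂ : max η₂ θs = η₂ := max_eq_left hθsη₂
  have hmaxb : max b θs = b := max_eq_left (hθsη₂.trans hbge)
  have hab : (a b : Γ) = (a η₂ : Γ) + (f b - f η₂) := by
    rw [haval, haval, hmaxη₂, hmaxb]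
    abel
  have hMR : (0 : ℝ) < (M : ℝ) := by exact_mod_cast hM
  have hjump : r η₂ + 1 / M ≤ r b := by
    have hstep : ∀ x ∈ S η₂, x + 1 / M ∈ S b := by
      rintro x ⟨m, k, hk, rfl, hmk⟩
      have hkR : (0 : ℝ) < (k : ℝ) := by exact_mod_cast hk
      refine ⟨m * M + k, k * M, Nat.mul_pos hk hM, ?_, ?_⟩
      · push_cast
        field_simp
      · have h1 : (m * M) • (u : Γ) ≤ (k * M) • (a η₂ : Γ) := by
          calc (m * M) • (u : Γ) = M • (m • (u : Γ)) := mul_nsmul _ m M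
          _ ≤ M • (k • (a η₂ : Γ)) := nsmul_le_nsmul_right hmk M
          _ = (k * M) • (a η₂ : Γ) := (mul_nsmul _ k M).symm
        have h2 : k • (u : Γ) ≤ (k * M) • (f b - f η₂) := by
          calc k • (u : Γ) ≤ k • (M • (f b - f η₂)) := nsmul_le_nsmul_right hMle k
          _ = (M * k) • (f b - f η₂) := (mul_nsmul _ M k).symm
          _ = (k * M) • (f b - f η₂) := by rw [Nat.mul_comm]
        calc (m * M + k) • (u : Γ) = (m * M) • (u : Γ) + k • (u : Γ) := add_nsmul _ _ _
        _ ≤ (k * M) • (a η₂ : Γ) + (k * M) • (f b - f η₂) := add_le_add h1 h2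
        _ = (k * M) • ((a η₂ : Γ) + (f b - f η₂)) := (nsmul_add _ _ _).symm
        _ = (k * M) • (a b : Γ) := by rw [hab]
    have h3 : ∀ x ∈ S η₂, x ≤ r b - 1 / M := fun x hx => by
      have := le_csSup (hSbdd b) (hstep x hx)
      linarith
    have h4 : r η₂ ≤ r b - 1 / M := csSup_le ⟨0, hSne η₂⟩ h3
    linarith
  have hre : r b = r η₂ := by
    rw [hη₁ b ((le_max_left η₁ θs).trans hbge), hη₁ η₂ (le_max_left η₁ θs)]
  rw [hre] at hjump
  have : (0 : ℝ) < 1 / M := by positivity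
  linarith

/-- The easy direction: if `Γ` is short, so is `C`. -/
lemma short_C_of_short (hcl : ∀ α β : {γ : Γ // γ ≠ 0},
      cl α ≤ cl β ↔ ∃ n : ℕ, 0 < n ∧ |(α : Γ)| ≤ n • |(β : Γ)|) (hsurj : Function.Surjective cl) (hΓ : IsShort Γ) : IsShort C := by
  classical
  choose rep hrep using hsurj
  set s : C → Γ := fun x => |(rep x : Γ)| with hsdef
  have key : ∀ x y : C, s x ≤ s y → x ≤ y := by
    intro x y hle
    have : cl (rep x) ≤ cl (rep y) := by
      rw [hcl]
      exact ⟨1, one_pos, by simpa [one_nsmul] using hle⟩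
    rwa [hrep, hrep] at this
  intro A
  constructor
  · obtain ⟨B', hB'sub, hB'c, hB'cof⟩ := (hΓ (s '' A)).1
    have h1 : ∀ p : B', ∃ x, x ∈ A ∧ s x = (p : Γ) := fun p => hB'sub p.2
    choose t ht1 ht2 using h1
    refine ⟨Set.range t, ?_, ?_, ?_⟩
    · rintro y ⟨p, rfl⟩; exact ht1 p
    · have := hB'c.to_subtype; exact Set.countable_range _
    · intro x hx
      obtain ⟨g, hgB, hge⟩ := hB'cof (s x) (Set.mem_image_of_mem s hx)
      refine ⟨t ⟨g, hgB⟩, ⟨⟨g, hgB⟩, rfl⟩, key _ _ ?_⟩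
      rw [ht2]
      exact hge
  · obtain ⟨B', hB'sub, hB'c, hB'coi⟩ := (hΓ (s '' A)).2
    have h1 : ∀ p : B', ∃ x, x ∈ A ∧ s x = (p : Γ) := fun p => hB'sub p.2
    choose t ht1 ht2 using h1
    refine ⟨Set.range t, ?_, ?_, ?_⟩
    · rintro y ⟨p, rfl⟩; exact ht1 p
    · have := hB'c.to_subtype; exact Set.countable_range _
    · intro x hx
      obtain ⟨g, hgB, hge⟩ := hB'coi (s x) (Set.mem_image_of_mem s hx)
      refine ⟨t ⟨g, hgB⟩, ⟨⟨g, hgB⟩, rfl⟩, key _ _ ?_⟩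
      rw [ht2]
      exact hge

end Group

end

end ShortAux

/-- A linearly ordered abelian group `Γ` is short iff its linearly ordered set
`[Γ]` of archimedean classes of nonzero elements is short.  Here `[Γ]` is realized as any linearly
ordered set `C` together with a surjection `cl` from the nonzero elements of `Γ` onto `C`
satisfying `cl α ≤ cl β ↔ |α| ≤ n|β| for some positive integer n`. -/
theorem short_iff_archimedeanClasses_short {Γ C : Type*} [AddCommGroup Γ] [LinearOrder Γ]
    [IsOrderedAddMonoid Γ]
    [LinearOrder C] (cl : {γ : Γ // γ ≠ 0} → C) (hsurj : Function.Surjective cl)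
    (hcl : ∀ α β : {γ : Γ // γ ≠ 0},
      cl α ≤ cl β ↔ ∃ n : ℕ, 0 < n ∧ |(α : Γ)| ≤ n • |(β : Γ)|) :
    IsShort Γ ↔ IsShort C := by
  constructor
  · exact fun h => ShortAux.short_C_of_short cl hcl hsurj h
  · intro hC A
    constructor
    · by_contra hcon
      push_neg at hcon
      have hcon' : ∀ B ⊆ A, B.Countable → ∃ x ∈ A, ∀ y ∈ B, ¬ x ≤ y := by
        intro B hB hBc
        obtain ⟨x, hx, hx2⟩ := hcon B hB hBc
        exact ⟨x, hx, fun y hy => not_le.2 (hx2 y hy)⟩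
      obtain ⟨f, hf⟩ := ShortAux.exists_strictMono hcon'
      exact ShortAux.no_strictMono cl hcl hC f hf
    · by_contra hcon
      push_neg at hcon
      have hcon' : ∀ B ⊆ A, B.Countable → ∃ x ∈ A, ∀ y ∈ B, ¬ y ≤ x := by
        intro B hB hBc
        obtain ⟨x, hx, hx2⟩ := hcon B hB hBc
        exact ⟨x, hx, fun y hy => (hx2 y hy).not_ge⟩
      obtain ⟨f, hf⟩ := ShortAux.exists_strictAnti hcon'
      exact ShortAux.no_strictMono cl hcl hC
        (fun ξ => -(f ξ))
        (fun ξ η h => neg_lt_neg (hf h))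
end

section
/- Let k be an ordered field, I a linearly ordered set, Γ := H[I,k] the Hahn product, and let ψ : Γ \ {0} → Γ be such that (Γ, ψ) is an H-couple over k of Hahn type. Let S ⊆ Γ be well-ordered. Then for each γ ∈ Γ there are only finitely many α ∈ S such that γ = α + ψ(e_i) for some i in the support of α. -/
variable {I k : Type*} [LinearOrder I] [Field k] [LinearOrder k] [IsStrictOrderedRing k]

/-- The leading (i.e. earliest-index) coefficient of a Hahn series in the Hahn product
`H[I,k] = HahnSeries I k`; it is `0` for the zero series. -/
noncomputable def leadCoeff (γ : HahnSeries I k) : k :=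
  letI := Classical.propDecidable (γ = 0)
  if h : γ = 0 then 0
  else γ.coeff (γ.isWF_support.min (HahnSeries.support_nonempty_iff.mpr h))

/-- `γ < δ` in the ordering of the Hahn product `H[I,k]`:  the coefficient of `δ - γ` at the
minimum of its support is positive. -/
def HahnLt (γ δ : HahnSeries I k) : Prop := 0 < leadCoeff (δ - γ)

/-- `γ ≤ δ` in the ordering of the Hahn product `H[I,k]`. -/
def HahnLe (γ δ : HahnSeries I k) : Prop := γ = δ ∨ HahnLt γ δ

/-- `(H[I,k], ψ)` is an *H-couple over `k` of Hahn type*:  `ψ` satisfies, for all nonzero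
`α, β`:  (A1) `ψ(α+β) ≥ min (ψ α) (ψ β)` if `α + β ≠ 0`;  (A2) `ψ(nα) = ψ(α)` for nonzero
integers `n`;  (A3) `α + ψ(α) > ψ(β)` if `α > 0`;  `ψ(cα) = ψ(α)` for nonzero `c ∈ k`;
`ψ(α) ≥ ψ(β)` whenever `0 < α ≤ β`; and for all nonzero `α, β` with `ψ(α) = ψ(β)` there is a
nonzero `c ∈ k` with `α - cβ = 0` or `ψ(α - cβ) > ψ(α)`. -/

lemma leadCoeff_zero : leadCoeff (0 : HahnSeries I k) = 0 := by
  rw [leadCoeff, dif_pos rfl]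

lemma leadCoeff_eq {x : HahnSeries I k} {m : I} (h1 : x.coeff m ≠ 0)
    (h2 : ∀ j < m, x.coeff j = 0) : leadCoeff x = x.coeff m := by
  have hx : x ≠ 0 := fun h => h1 (by simp [h])
  rw [leadCoeff, dif_neg hx]
  have hne := HahnSeries.support_nonempty_iff.mpr hx
  have hmem : x.isWF_support.min hne ∈ x.support := x.isWF_support.min_mem hne
  have hle : x.isWF_support.min hne ≤ m :=
    x.isWF_support.min_le hne ((x.mem_support m).mpr h1)
  rcases lt_or_eq_of_le hle with hlt | heq
  · exact absurd (h2 _ hlt) ((x.mem_support _).mp hmem)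
  · rw [heq]

lemma hahnLt_of_coeff {x y : HahnSeries I k} {m : I} (h1 : 0 < (y - x).coeff m)
    (h2 : ∀ j < m, (y - x).coeff j = 0) : HahnLt x y := by
  rw [HahnLt, leadCoeff_eq (ne_of_gt h1) h2]; exact h1

lemma exists_coeff_of_hahnLt {x y : HahnSeries I k} (h : HahnLt x y) :
    ∃ m, 0 < (y - x).coeff m ∧ ∀ j < m, (y - x).coeff j = 0 := by
  have hne : y - x ≠ 0 := by
    intro h0
    rw [HahnLt, h0, leadCoeff_zero] at h
    exact lt_irrefl 0 h
  have hne' := HahnSeries.support_nonempty_iff.mpr hne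
  refine ⟨(y - x).isWF_support.min hne', ?_, ?_⟩
  · rw [HahnLt, leadCoeff, dif_neg hne] at h
    exact h
  · intro j hj
    by_contra hc
    exact absurd hj (not_lt.mpr ((y - x).isWF_support.min_le hne'
      (((y - x).mem_support j).mpr hc)))

lemma hahnLt_irrefl (x : HahnSeries I k) : ¬ HahnLt x x := by
  rw [HahnLt, sub_self, leadCoeff_zero]
  exact lt_irrefl 0

lemma hahnLt_asymm {x y : HahnSeries I k} (h : HahnLt x y) : ¬ HahnLt y x := by
  intro h'
  obtain ⟨m, hm, hlow⟩ := exists_coeff_of_hahnLt h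
  obtain ⟨m', hm', hlow'⟩ := exists_coeff_of_hahnLt h'
  have hxy : ∀ j, (x - y).coeff j = -((y - x).coeff j) := by
    intro j; rw [HahnSeries.coeff_sub, HahnSeries.coeff_sub]; ring
  rcases lt_trichotomy m m' with hc | hc | hc
  · have := hlow' m hc
    rw [hxy] at this
    rw [neg_eq_zero.mp this] at hm
    exact lt_irrefl 0 hm
  · rw [hc] at hm
    have h2 := hxy m'
    rw [h2] at hm'
    linarith
  · have h2 := hxy m'
    rw [hlow m' hc, neg_zero] at h2
    rw [h2] at hm'
    exact lt_irrefl 0 hm'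

lemma hahnLt_trichotomy {x y : HahnSeries I k} (h : x ≠ y) : HahnLt x y ∨ HahnLt y x := by
  have hne : y - x ≠ 0 := sub_ne_zero_of_ne (Ne.symm h)
  have hne' := HahnSeries.support_nonempty_iff.mpr hne
  set m := (y - x).isWF_support.min hne' with hm
  have hmem : (y - x).coeff m ≠ 0 := ((y - x).mem_support m).mp ((y - x).isWF_support.min_mem hne')
  have hlow : ∀ j < m, (y - x).coeff j = 0 := by
    intro j hj
    by_contra hc
    exact absurd hj (not_lt.mpr ((y - x).isWF_support.min_le hne'
      (((y - x).mem_support j).mpr hc)))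
  rcases lt_or_gt_of_ne hmem with hneg | hpos
  · right
    refine hahnLt_of_coeff (m := m) ?_ ?_
    · rw [HahnSeries.coeff_sub]
      rw [HahnSeries.coeff_sub] at hneg
      linarith
    · intro j hj
      have := hlow j hj
      rw [HahnSeries.coeff_sub] at this ⊢
      linarith
  · exact Or.inl (hahnLt_of_coeff hpos hlow)

/-- `(H[I,k], ψ)` is an *H-couple over `k` of Hahn type*:  `ψ` satisfies, for all nonzero
`α, β`:  (A1) `ψ(α+β) ≥ min (ψ α) (ψ β)` if `α + β ≠ 0`;  (A2) `ψ(nα) = ψ(α)` for nonzero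
integers `n`;  (A3) `α + ψ(α) > ψ(β)` if `α > 0`;  `ψ(cα) = ψ(α)` for nonzero `c ∈ k`;
`ψ(α) ≥ ψ(β)` whenever `0 < α ≤ β`; and for all nonzero `α, β` with `ψ(α) = ψ(β)` there is a
nonzero `c ∈ k` with `α - cβ = 0` or `ψ(α - cβ) > ψ(α)`. -/
structure IsHCoupleHahnType (ψ : HahnSeries I k → HahnSeries I k) : Prop where
  A1 : ∀ α β : HahnSeries I k, α ≠ 0 → β ≠ 0 → α + β ≠ 0 →
    HahnLe (ψ α) (ψ (α + β)) ∨ HahnLe (ψ β) (ψ (α + β))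
  A2 : ∀ (α : HahnSeries I k) (n : ℤ), α ≠ 0 → n ≠ 0 → ψ (n • α) = ψ α
  A3 : ∀ α β : HahnSeries I k, β ≠ 0 → HahnLt 0 α → HahnLt (ψ β) (α + ψ α)
  smul_eq : ∀ (α : HahnSeries I k) (c : k), α ≠ 0 → c ≠ 0 → ψ (c • α) = ψ α
  mono : ∀ α β : HahnSeries I k, HahnLt 0 α → HahnLe α β → HahnLe (ψ β) (ψ α)
  hahnType : ∀ α β : HahnSeries I k, α ≠ 0 → β ≠ 0 → ψ α = ψ β →
    ∃ c : k, c ≠ 0 ∧ (α - c • β = 0 ∨ HahnLt (ψ α) (ψ (α - c • β)))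


lemma single_hahnLt_pos {i : I} {t : k} (ht : 0 < t) :
    HahnLt 0 (HahnSeries.single i t) := by
  refine hahnLt_of_coeff (m := i) ?_ ?_
  · rw [sub_zero, HahnSeries.coeff_single_same]; exact ht
  · intro j hj
    rw [sub_zero, HahnSeries.coeff_single_of_ne (ne_of_lt hj)]

lemma smul_single_one (i : I) (t : k) :
    t • HahnSeries.single i (1 : k) = HahnSeries.single i t := by
  ext j
  rw [HahnSeries.coeff_smul, HahnSeries.coeff_single, HahnSeries.coeff_single]
  by_cases h : j = i <;> simp [h]

/-- Strict monotonicity of `i ↦ ψ(e_i)`. -/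
lemma psi_strictMono {ψ : HahnSeries I k → HahnSeries I k} (hψ : IsHCoupleHahnType ψ)
    {i j : I} (hij : i < j) :
    HahnLt (ψ (HahnSeries.single i 1)) (ψ (HahnSeries.single j 1)) := by
  set ei : HahnSeries I k := HahnSeries.single i 1 with hei'
  set ej : HahnSeries I k := HahnSeries.single j 1 with hej'
  have hei : ei ≠ 0 := HahnSeries.single_ne_zero one_ne_zero
  have hej : ej ≠ 0 := HahnSeries.single_ne_zero one_ne_zero
  have hejpos : HahnLt 0 ej := single_hahnLt_pos one_pos
  have hjei : HahnLt ej ei := by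
    refine hahnLt_of_coeff (m := i) ?_ ?_
    · rw [HahnSeries.coeff_sub, HahnSeries.coeff_single_same,
        HahnSeries.coeff_single_of_ne (ne_of_lt hij)]
      norm_num
    · intro j' hj'
      rw [HahnSeries.coeff_sub, HahnSeries.coeff_single_of_ne (ne_of_lt hj'),
        HahnSeries.coeff_single_of_ne (ne_of_lt (hj'.trans hij))]
      ring
  have hle := hψ.mono ej ei hejpos (Or.inr hjei)
  rcases hle with heq | hlt
  · -- ψ ei = ψ ej : use Hahn type to derive a contradiction
    exfalso
    obtain ⟨c, hc, hcase⟩ := hψ.hahnType ei ej hei hej heq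
    set δ : HahnSeries I k := ei - c • ej with hδ'
    have hδi : δ.coeff i = 1 := by
      rw [hδ', HahnSeries.coeff_sub, HahnSeries.coeff_smul, hei', hej',
        HahnSeries.coeff_single_same, HahnSeries.coeff_single_of_ne (ne_of_lt hij)]
      simp
    have hδlow : ∀ j' < i, δ.coeff j' = 0 := by
      intro j' hj'
      rw [hδ', HahnSeries.coeff_sub, HahnSeries.coeff_smul, hei', hej',
        HahnSeries.coeff_single_of_ne (ne_of_lt hj'),
        HahnSeries.coeff_single_of_ne (ne_of_lt (hj'.trans hij))]
      simp
    have hδne : δ ≠ 0 := fun h0 => by rw [h0] at hδi; simp at hδi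
    rcases hcase with h0 | hgt
    · exact hδne h0
    · -- ej < δ, so ψ δ ≤ ψ ej = ψ ei, contradicting ψ ei < ψ δ
      have hejδ : HahnLt ej δ := by
        refine hahnLt_of_coeff (m := i) ?_ ?_
        · rw [HahnSeries.coeff_sub, hδi, hej',
            HahnSeries.coeff_single_of_ne (ne_of_lt hij)]
          norm_num
        · intro j' hj'
          rw [HahnSeries.coeff_sub, hδlow j' hj', hej',
            HahnSeries.coeff_single_of_ne (ne_of_lt (hj'.trans hij))]
          ring
      have hle2 := hψ.mono ej δ hejpos (Or.inr hejδ)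
      rcases hle2 with heq2 | hlt2
      · rw [heq2, ← heq] at hgt
        exact hahnLt_irrefl _ hgt
      · rw [← heq] at hlt2
        exact hahnLt_asymm hgt hlt2
  · exact hlt

/-- Key lemma: if `ψ(e_i) < ψ(e_j)` then the difference is supported strictly above `i`. -/
lemma psi_coeff_eq {ψ : HahnSeries I k → HahnSeries I k} (hψ : IsHCoupleHahnType ψ)
    {i j : I} (h : HahnLt (ψ (HahnSeries.single i 1)) (ψ (HahnSeries.single j 1))) :
    ∀ j' ≤ i, (ψ (HahnSeries.single j 1)).coeff j' = (ψ (HahnSeries.single i 1)).coeff j' := by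
  set ei : HahnSeries I k := HahnSeries.single i 1 with hei'
  set ej : HahnSeries I k := HahnSeries.single j 1 with hej'
  have hej : ej ≠ 0 := HahnSeries.single_ne_zero one_ne_zero
  obtain ⟨m, hm, hlow⟩ := exists_coeff_of_hahnLt h
  -- claim : i < m
  have him : i < m := by
    by_contra hc
    push_neg at hc   -- m ≤ i
    -- choose t > 0 suitably
    rcases lt_or_eq_of_le hc with hmi | hmi
    · -- m < i : use α = single i 1
      have h3 := hψ.A3 (HahnSeries.single i 1) ej hej (single_hahnLt_pos one_pos)
      -- (single i 1 + ψ ei) - ψ ej has a negative coefficient at m with zeros below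
      have hneg : HahnLt (HahnSeries.single i (1:k) + ψ ei) (ψ ej) := by
        refine hahnLt_of_coeff (m := m) ?_ ?_
        · rw [HahnSeries.coeff_sub, HahnSeries.coeff_add,
            HahnSeries.coeff_single_of_ne (ne_of_lt hmi)]
          have : (ψ ej).coeff m - (ψ ei).coeff m > 0 := by
            have := hm; rw [HahnSeries.coeff_sub] at this; exact this
          linarith
        · intro j' hj'
          have h0 := hlow j' hj'
          rw [HahnSeries.coeff_sub] at h0
          rw [HahnSeries.coeff_sub, HahnSeries.coeff_add,
            HahnSeries.coeff_single_of_ne (ne_of_lt (hj'.trans hmi))]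
          linarith
      exact hahnLt_asymm h3 hneg
    · -- m = i : use α = single i t with t = half the leading coefficient
      subst hmi
      set t : k := (ψ ej - ψ ei).coeff m / 2 with ht'
      have ht : 0 < t := by positivity
      have hψt : ψ (HahnSeries.single m t) = ψ ei := by
        rw [← smul_single_one, hψ.smul_eq _ t (HahnSeries.single_ne_zero one_ne_zero)
          (ne_of_gt ht)]
      have h3 := hψ.A3 (HahnSeries.single m t) ej hej (single_hahnLt_pos ht)
      rw [hψt] at h3
      have hneg : HahnLt (HahnSeries.single m t + ψ ei) (ψ ej) := by
        refine hahnLt_of_coeff (m := m) ?_ ?_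
        · rw [HahnSeries.coeff_sub, HahnSeries.coeff_add, HahnSeries.coeff_single_same]
          have hmc := hm; rw [HahnSeries.coeff_sub] at hmc
          have : (ψ ej - ψ ei).coeff m = (ψ ej).coeff m - (ψ ei).coeff m :=
            HahnSeries.coeff_sub
          rw [ht']
          rw [this]
          linarith
        · intro j' hj'
          have h0 := hlow j' hj'
          rw [HahnSeries.coeff_sub] at h0
          rw [HahnSeries.coeff_sub, HahnSeries.coeff_add,
            HahnSeries.coeff_single_of_ne (ne_of_lt hj')]
          linarith
      exact hahnLt_asymm h3 hneg
  intro j' hj'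
  have h0 := hlow j' (lt_of_le_of_lt hj' him)
  rw [HahnSeries.coeff_sub] at h0
  linarith

lemma no_descending {α : Type*} {r : α → α → Prop} (h : WellFounded r) (f : ℕ → α)
    (hf : ∀ n, r (f (n + 1)) (f n)) : False := by
  have H : ∀ x, ∀ n, f n ≠ x := by
    intro x
    refine h.induction (C := fun y => ∀ n, f n ≠ y) x ?_
    intro y IH n hx
    exact IH (f (n + 1)) (by rw [← hx]; exact hf n) (n + 1) rfl
  exact H (f 0) 0 rfl

/-- Let `(Γ, ψ)`, `Γ := H[I,k]`, be an H-couple over `k` of Hahn type, and let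
`S ⊆ Γ` be well-ordered.  Then for each `γ ∈ Γ` there are only finitely many `α ∈ S` such that
`γ = α + ψ(e_i)` for some `i` in the support of `α`. -/
theorem finite_fibers_of_wellOrdered (ψ : HahnSeries I k → HahnSeries I k)
    (hψ : IsHCoupleHahnType ψ)
    (S : Set (HahnSeries I k)) (hS : S.WellFoundedOn (fun a b => HahnLt a b)) :
    ∀ γ : HahnSeries I k,
      {α : HahnSeries I k | α ∈ S ∧
        ∃ i ∈ α.support, γ = α + ψ (HahnSeries.single i 1)}.Finite := by
  intro γ
  by_contra hfin
  set T := {α : HahnSeries I k | α ∈ S ∧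
      ∃ i ∈ α.support, γ = α + ψ (HahnSeries.single i 1)} with hT'
  have hTS : T ⊆ S := fun α hα => hα.1
  have hT : T.WellFoundedOn (fun a b => HahnLt a b) := hS.subset hTS
  have hinf : T.Infinite := hfin
  -- selection of indices
  have hsel : ∀ a : T, ∃ i, i ∈ (a : HahnSeries I k).support ∧
      γ = (a : HahnSeries I k) + ψ (HahnSeries.single i 1) := fun a => a.2.2
  choose φ hφs hφγ using hsel
  -- injectivity of φ
  have hinj : Function.Injective φ := by
    intro a b hab
    have h1 := (hφγ a).symm.trans (hφγ b)
    rw [hab] at h1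
    exact Subtype.ext (add_right_cancel h1)
  -- difference formula
  have hdiff : ∀ a b : T, ψ (HahnSeries.single (φ a) 1) - ψ (HahnSeries.single (φ b) 1)
      = (b : HahnSeries I k) - (a : HahnSeries I k) := by
    intro a b
    have h1 := (hφγ a).symm.trans (hφγ b)
    rw [sub_eq_sub_iff_add_eq_add]
    rw [add_comm] at h1
    rw [h1, add_comm]
  -- order reversal
  have hrev : ∀ a b : T, HahnLt (a : HahnSeries I k) (b : HahnSeries I k) → φ b < φ a := by
    intro a b hab
    have h1 : HahnLt (ψ (HahnSeries.single (φ b) 1)) (ψ (HahnSeries.single (φ a) 1)) := by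
      rw [HahnLt, hdiff a b]
      exact hab
    rcases lt_trichotomy (φ a) (φ b) with hc | hc | hc
    · exact absurd (psi_strictMono hψ hc) (hahnLt_asymm h1)
    · rw [hinj hc] at hab
      exact absurd hab (hahnLt_irrefl _)
    · exact hc
  -- converse direction
  have hrev' : ∀ a b : T, φ a < φ b → HahnLt (b : HahnSeries I k) (a : HahnSeries I k) := by
    intro a b hab
    have hne : (b : HahnSeries I k) ≠ (a : HahnSeries I k) := by
      intro h0
      rw [Subtype.coe_injective h0] at hab
      exact lt_irrefl _ hab
    rcases hahnLt_trichotomy hne with h1 | h1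
    · exact h1
    · exact absurd hab (not_lt.mpr (le_of_lt (hrev a b h1)))
  -- support membership
  have hsupp : ∀ a b : T, HahnLt (a : HahnSeries I k) (b : HahnSeries I k) →
      φ b ∈ (a : HahnSeries I k).support := by
    intro a b hab
    have h1 : HahnLt (ψ (HahnSeries.single (φ b) 1)) (ψ (HahnSeries.single (φ a) 1)) := by
      rw [HahnLt, hdiff a b]
      exact hab
    have h2 := psi_coeff_eq hψ h1 (φ b) le_rfl
    have h3 : ((b : HahnSeries I k) - (a : HahnSeries I k)).coeff (φ b) = 0 := by
      rw [← hdiff a b, HahnSeries.coeff_sub, h2, sub_self]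
    rw [HahnSeries.coeff_sub, sub_eq_zero] at h3
    have h4 := (HahnSeries.mem_support _ _).mp (hφs b)
    rw [HahnSeries.mem_support, ← h3]
    exact h4
  -- minimal element of T
  obtain ⟨a₀, -, hmin⟩ := hT.has_min Set.univ ⟨⟨hinf.nonempty.choose, hinf.nonempty.choose_spec⟩,
    Set.mem_univ _⟩
  have hmin' : ∀ a : T, a ≠ a₀ → HahnLt (a₀ : HahnSeries I k) (a : HahnSeries I k) := by
    intro a ha
    have hne : (a₀ : HahnSeries I k) ≠ (a : HahnSeries I k) :=
      fun h0 => ha (Subtype.ext h0.symm)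
    rcases hahnLt_trichotomy hne with h1 | h1
    · exact h1
    · exact absurd h1 (hmin a (Set.mem_univ a))
  -- an infinite family avoiding a₀
  have hinf' : (T \ {(a₀ : HahnSeries I k)}).Infinite :=
    hinf.diff (Set.finite_singleton _)
  set emb := hinf'.natEmbedding with hemb'
  have haT : ∀ n : ℕ, ((emb n : HahnSeries I k)) ∈ T := fun n => (emb n).2.1
  set a : ℕ → T := fun n => ⟨(emb n : HahnSeries I k), haT n⟩ with ha'
  have hane : ∀ n, a n ≠ a₀ := by
    intro n h0
    exact (emb n).2.2 (show (emb n : HahnSeries I k) ∈ {(a₀ : HahnSeries I k)} from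
      congrArg Subtype.val h0)
  have hainj : Function.Injective a := by
    intro m n hmn
    have h1 := congrArg Subtype.val hmn
    exact emb.injective (Subtype.ext h1)
  set j : ℕ → I := fun n => φ (a n) with hj'
  have hjmem : ∀ n, j n ∈ (a₀ : HahnSeries I k).support :=
    fun n => hsupp a₀ (a n) (hmin' (a n) (hane n))
  have hjinj : Function.Injective j := fun m n hmn => hainj (hinj hmn)
  obtain ⟨g, hg⟩ := ((a₀ : HahnSeries I k).isWF_support.isPWO).exists_monotone_subseq hjmem
  have hdesc : ∀ n : ℕ, HahnLt ((a (g (n + 1))) : HahnSeries I k) ((a (g n)) : HahnSeries I k) := by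
    intro n
    have hlt : j (g n) < j (g (n + 1)) := by
      rcases lt_or_eq_of_le (hg (Nat.le_succ n)) with h1 | h1
      · exact h1
      · exact absurd (g.injective (hjinj h1)) (Nat.succ_ne_self n).symm
    exact hrev' (a (g n)) (a (g (n + 1))) hlt
  exact no_descending hT (fun n => a (g n)) hdesc
end

section
/- Let k be an ordered field, I a linearly ordered set, Γ := H[I,k] the Hahn product, and let ψ : Γ \ {0} → Γ be such that (Γ, ψ) is an H-couple over k of Hahn type. Let S ⊆ Γ be well-ordered. Then the set {α + ψ(e_i) : α ∈ S, i ∈ supp α} is a well-ordered subset of Γ. -/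
variable {I k : Type*} [LinearOrder I] [Field k] [LinearOrder k] [IsStrictOrderedRing k]

namespace HCAux

def Pos (γ : HahnSeries I k) : Prop := 0 < leadCoeff γ

theorem hahnLt_def {a b : HahnSeries I k} : HahnLt a b ↔ Pos (b - a) := Iff.rfl

theorem not_pos_zero : ¬ Pos (0 : HahnSeries I k) := by
  simp [Pos, leadCoeff]

theorem leadCoeff_eq {γ : HahnSeries I k} {m : I} (h0 : γ.coeff m ≠ 0)
    (hb : ∀ j, j < m → γ.coeff j = 0) : leadCoeff γ = γ.coeff m := by
  have hγ : γ ≠ 0 := fun h => h0 (by rw [h, HahnSeries.coeff_zero])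
  have hne : γ.support.Nonempty := HahnSeries.support_nonempty_iff.mpr hγ
  have h1 : γ.isWF_support.min hne ≤ m := Set.IsWF.min_le _ _ ((γ.mem_support m).mpr h0)
  have h2 : m ≤ γ.isWF_support.min hne := by
    by_contra hlt
    push_neg at hlt
    exact ((γ.mem_support _).mp (γ.isWF_support.min_mem hne)) (hb _ hlt)
  have hm : γ.isWF_support.min hne = m := le_antisymm h1 h2
  rw [leadCoeff, dif_neg hγ]
  exact congrArg γ.coeff hm

theorem pos_of {γ : HahnSeries I k} {m : I} (h : 0 < γ.coeff m)
    (hb : ∀ j, j < m → γ.coeff j = 0) : Pos γ := by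
  have := leadCoeff_eq h.ne' hb
  rw [Pos, this]; exact h

theorem not_pos_of {γ : HahnSeries I k} {m : I} (h : γ.coeff m < 0)
    (hb : ∀ j, j < m → γ.coeff j = 0) : ¬ Pos γ := by
  rw [Pos, leadCoeff_eq h.ne hb]
  exact not_lt.mpr h.le

theorem pos_elim {γ : HahnSeries I k} (h : Pos γ) :
    ∃ m, 0 < γ.coeff m ∧ ∀ j, j < m → γ.coeff j = 0 := by
  have hγ : γ ≠ 0 := by rintro rfl; exact not_pos_zero h
  have hne : γ.support.Nonempty := HahnSeries.support_nonempty_iff.mpr hγ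
  refine ⟨γ.isWF_support.min hne, ?_, ?_⟩
  · have : leadCoeff γ = γ.coeff (γ.isWF_support.min hne) := by
      rw [leadCoeff, dif_neg hγ]
    rw [Pos, this] at h
    exact h
  · intro j hj
    by_contra h0
    exact Set.IsWF.not_lt_min γ.isWF_support hne ((γ.mem_support j).mpr h0) hj

theorem pos_add {γ δ : HahnSeries I k} (hγ : Pos γ) (hδ : Pos δ) : Pos (γ + δ) := by
  obtain ⟨m, hm, hmb⟩ := pos_elim hγ
  obtain ⟨m', hm', hmb'⟩ := pos_elim hδ
  rcases lt_trichotomy m m' with h | h | h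
  · refine pos_of (m := m) ?_ ?_
    · rw [HahnSeries.coeff_add, hmb' m h, add_zero]; exact hm
    · intro j hj
      rw [HahnSeries.coeff_add, hmb j hj, hmb' j (hj.trans h), add_zero]
  · subst h
    refine pos_of (m := m) ?_ ?_
    · rw [HahnSeries.coeff_add]; exact add_pos hm hm'
    · intro j hj
      rw [HahnSeries.coeff_add, hmb j hj, hmb' j hj, add_zero]
  · refine pos_of (m := m') ?_ ?_
    · rw [HahnSeries.coeff_add, hmb m' h, zero_add]; exact hm'
    · intro j hj
      rw [HahnSeries.coeff_add, hmb j (hj.trans h), hmb' j hj, add_zero]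

theorem not_pos_and_neg {γ : HahnSeries I k} (h1 : Pos γ) (h2 : Pos (-γ)) : False := by
  obtain ⟨m, hm, hmb⟩ := pos_elim h1
  obtain ⟨m', hm', hmb'⟩ := pos_elim h2
  simp only [HahnSeries.coeff_neg] at hm' hmb'
  rcases lt_trichotomy m m' with h | h | h
  · have := hmb' m h; simp only [neg_eq_zero] at this; exact hm.ne' this
  · subst h; linarith
  · have := hmb m' h; rw [this] at hm'; simp at hm'

theorem pos_or_neg {γ : HahnSeries I k} (h : γ ≠ 0) : Pos γ ∨ Pos (-γ) := by
  have hne : γ.support.Nonempty := HahnSeries.support_nonempty_iff.mpr h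
  set m := γ.isWF_support.min hne with hmdef
  have hmem : γ.coeff m ≠ 0 := (γ.mem_support m).mp (γ.isWF_support.min_mem hne)
  have hb : ∀ j, j < m → γ.coeff j = 0 := by
    intro j hj
    by_contra h0
    exact Set.IsWF.not_lt_min γ.isWF_support hne ((γ.mem_support j).mpr h0) hj
  rcases hmem.lt_or_gt with hneg | hpos
  · right
    refine pos_of (m := m) ?_ ?_
    · rw [HahnSeries.coeff_neg]; linarith
    · intro j hj; rw [HahnSeries.coeff_neg, hb j hj, neg_zero]
  · left; exact pos_of hpos hb

noncomputable instance : LinearOrder (HahnSeries I k) where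
  le := HahnLe
  lt := HahnLt
  le_refl a := Or.inl rfl
  le_trans a b c hab hbc := by
    rcases hab with rfl | hab
    · exact hbc
    rcases hbc with rfl | hbc
    · exact Or.inr hab
    refine Or.inr ?_
    rw [hahnLt_def] at *
    rw [show c - a = (c - b) + (b - a) by abel]
    exact pos_add hbc hab
  lt_iff_le_not_ge a b := by
    constructor
    · intro h
      have h' : HahnLt a b := h
      refine ⟨Or.inr h', ?_⟩
      rintro (rfl | hba)
      · rw [hahnLt_def, sub_self] at h'; exact not_pos_zero h'
      · rw [hahnLt_def] at h' hba
        rw [show a - b = -(b - a) by abel] at hba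
        exact not_pos_and_neg h' hba
    · rintro ⟨(rfl | h), hn⟩
      · exact absurd (Or.inl rfl) hn
      · exact h
  le_antisymm a b hab hba := by
    rcases hab with rfl | hab
    · rfl
    rcases hba with e | hba
    · exact e.symm
    rw [hahnLt_def] at hab hba
    rw [show a - b = -(b - a) by abel] at hba
    exact absurd hba (fun h => not_pos_and_neg hab h)
  le_total a b := by
    rcases eq_or_ne a b with rfl | h
    · exact Or.inl (Or.inl rfl)
    have hne : b - a ≠ 0 := sub_ne_zero.mpr (Ne.symm h)
    rcases pos_or_neg hne with hp | hn
    · exact Or.inl (Or.inr hp)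
    · refine Or.inr (Or.inr ?_)
      rw [hahnLt_def, show a - b = -(b - a) by abel]
      exact hn
  toDecidableLE := Classical.decRel _

theorem lt0_iff {γ : HahnSeries I k} : HahnLt 0 γ ↔ Pos γ := by
  rw [hahnLt_def, sub_zero]

end HCAux

namespace HCAux

/-- abbreviation for the basis monomials -/
noncomputable def E (i : I) : HahnSeries I k := HahnSeries.single i (1 : k)

theorem E_ne (i : I) : (E i : HahnSeries I k) ≠ 0 :=
  HahnSeries.single_ne_zero one_ne_zero

theorem E_coeff_same (i : I) : (E i : HahnSeries I k).coeff i = 1 :=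
  HahnSeries.coeff_single_same i 1

theorem E_coeff_ne {i j : I} (h : j ≠ i) : (E i : HahnSeries I k).coeff j = 0 :=
  HahnSeries.coeff_single_of_ne h

theorem habel (w x y : HahnSeries I k) : w + x - y = w - (y - x) := by abel

theorem pos_E (i : I) : Pos (E i : HahnSeries I k) := by
  refine pos_of (m := i) ?_ ?_
  · rw [E_coeff_same]; exact one_pos
  · intro j hj; exact E_coeff_ne hj.ne

theorem lt0E (i : I) : HahnLt 0 (E i : HahnSeries I k) := lt0_iff.mpr (pos_E i)

variable {ψ : HahnSeries I k → HahnSeries I k}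

theorem monoE (hψ : IsHCoupleHahnType ψ) {i j : I} (h : i < j) :
    HahnLe (ψ (E i)) (ψ (E j)) := by
  refine hψ.mono (E j) (E i) (lt0E j) (Or.inr ?_)
  rw [hahnLt_def]
  refine pos_of (m := i) ?_ ?_
  · rw [HahnSeries.coeff_sub, E_coeff_same, E_coeff_ne h.ne, sub_zero]; exact one_pos
  · intro l hl
    rw [HahnSeries.coeff_sub, E_coeff_ne hl.ne, E_coeff_ne (hl.trans h).ne, sub_zero]

theorem key (hψ : IsHCoupleHahnType ψ) {i j : I} (hpos : Pos (ψ (E j) - ψ (E i))) :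
    ∀ l, l ≤ i → (ψ (E j) - ψ (E i)).coeff l = 0 := by
  obtain ⟨p, hp, hpb⟩ := pos_elim hpos
  suffices hip : i < p by
    intro l hl; exact hpb l (lt_of_le_of_lt hl hip)
  by_contra hip
  push_neg at hip
  rcases lt_or_eq_of_le hip with hlt | heq
  · have h3 := hψ.A3 (E i) (E j) (E_ne j) (lt0E i)
    rw [hahnLt_def] at h3
    rw [habel] at h3
    refine not_pos_of (m := p) ?_ ?_ h3
    · rw [HahnSeries.coeff_sub, E_coeff_ne hlt.ne]; linarith
    · intro l hl
      rw [HahnSeries.coeff_sub, E_coeff_ne (hl.trans hlt).ne, hpb l hl, sub_zero]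
  · subst heq
    set c := (ψ (E j) - ψ (E p)).coeff p with hc
    have hc2 : c / 2 ≠ 0 := div_ne_zero hp.ne' two_ne_zero
    have hψα : ψ ((c / 2) • (E p : HahnSeries I k)) = ψ (E p) := hψ.smul_eq (E p) (c / 2) (E_ne p) hc2
    have hα : HahnLt 0 ((c / 2) • (E p : HahnSeries I k)) := by
      rw [lt0_iff]
      refine pos_of (m := p) ?_ ?_
      · rw [HahnSeries.coeff_smul, E_coeff_same, smul_eq_mul, mul_one]
        exact half_pos hp
      · intro l hl
        rw [HahnSeries.coeff_smul, E_coeff_ne hl.ne, smul_zero]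
    have h3 := hψ.A3 ((c / 2) • E p) (E j) (E_ne j) hα
    rw [hψα, hahnLt_def] at h3
    rw [habel] at h3
    refine not_pos_of (m := p) ?_ ?_ h3
    · rw [HahnSeries.coeff_sub, HahnSeries.coeff_smul, E_coeff_same, smul_eq_mul, mul_one, ← hc]
      linarith
    · intro l hl
      rw [HahnSeries.coeff_sub, HahnSeries.coeff_smul, E_coeff_ne hl.ne, smul_zero,
        hpb l hl, sub_zero]

theorem lt_of_posdiff (hψ : IsHCoupleHahnType ψ) {i i' : I}
    (h : Pos (ψ (E i) - ψ (E i'))) : i' < i := by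
  rcases lt_trichotomy i' i with h1 | h1 | h1
  · exact h1
  · subst h1; rw [sub_self] at h; exact absurd h not_pos_zero
  · rcases monoE hψ h1 with heq | hlt
    · rw [heq, sub_self] at h; exact absurd h not_pos_zero
    · rw [hahnLt_def] at hlt
      rw [show ψ (E i') - ψ (E i) = -(ψ (E i) - ψ (E i')) by abel] at hlt
      exact absurd hlt (fun h2 => not_pos_and_neg h h2)

theorem le_lt_coeff {δ u : HahnSeries I k} {i : I} (hδ : δ = 0 ∨ Pos δ)
    (hlt : Pos (u - δ)) (hu : ∀ l, l ≤ i → u.coeff l = 0) :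
    ∀ l, l ≤ i → δ.coeff l = 0 := by
  rcases hδ with rfl | hδ
  · intro l _; exact HahnSeries.coeff_zero
  obtain ⟨q, hq, hqb⟩ := pos_elim hδ
  suffices hiq : i < q by
    intro l hl; exact hqb l (lt_of_le_of_lt hl hiq)
  by_contra hiq
  push_neg at hiq
  refine not_pos_of (m := q) ?_ ?_ hlt
  · rw [HahnSeries.coeff_sub, hu q hiq]; linarith
  · intro l hl
    rw [HahnSeries.coeff_sub, hu l (hl.le.trans hiq), hqb l hl, sub_zero]


theorem no_descending (hψ : IsHCoupleHahnType ψ) (A F : ℕ → HahnSeries I k) (J : ℕ → I)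
    (hFanti : StrictAnti F) (hmono : Monotone A)
    (hFeq : ∀ n, F n = A n + ψ (E (J n)))
    (hJs : ∀ n, J n ∈ (A n).support) : False := by
  have hγpos : ∀ n, Pos (F n - F (n + 1)) := by
    intro n
    have h1 : HahnLt (F (n + 1)) (F n) := hFanti (Nat.lt_succ_self n)
    exact h1
  have hδ0 : ∀ n, A (n + 1) - A n = 0 ∨ Pos (A (n + 1) - A n) := by
    intro n
    have hle : HahnLe (A n) (A (n + 1)) := hmono (Nat.le_succ n)
    rcases hle with e | hlt
    · exact Or.inl (by rw [← e, sub_self])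
    · exact Or.inr hlt
  have hueq : ∀ n, (ψ (E (J n)) - ψ (E (J (n + 1)))) - (A (n + 1) - A n)
      = F n - F (n + 1) := by
    intro n
    rw [hFeq n, hFeq (n + 1)]
    abel
  have hupos : ∀ n, Pos (ψ (E (J n)) - ψ (E (J (n + 1)))) := by
    intro n
    have h2 : Pos ((ψ (E (J n)) - ψ (E (J (n + 1)))) - (A (n + 1) - A n)) := by
      rw [hueq n]; exact hγpos n
    rcases hδ0 n with e | hp
    · rwa [e, sub_zero] at h2
    · have h3 := pos_add hp h2
      rwa [show (A (n + 1) - A n) + ((ψ (E (J n)) - ψ (E (J (n + 1)))) - (A (n + 1) - A n))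
          = ψ (E (J n)) - ψ (E (J (n + 1))) by abel] at h3
  have hJlt : ∀ n, J (n + 1) < J n := fun n => lt_of_posdiff hψ (hupos n)
  have hJanti : StrictAnti J := strictAnti_nat_of_succ_lt hJlt
  have hδc : ∀ n, ∀ l, l ≤ J (n + 1) → (A (n + 1) - A n).coeff l = 0 := by
    intro n
    exact le_lt_coeff (hδ0 n) (by rw [hueq n]; exact hγpos n) (key hψ (hupos n))
  have tele : ∀ n m, m ≤ n + 1 → (A m).coeff (J (n + 1)) = (A 0).coeff (J (n + 1)) := by
    intro n m
    induction m with
    | zero => intro _; rfl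
    | succ p ih =>
      intro hp
      have hple : p ≤ n + 1 := Nat.le_of_succ_le hp
      have hJle : J (n + 1) ≤ J (p + 1) := hJanti.antitone hp
      have hz : (A (p + 1) - A p).coeff (J (n + 1)) = 0 := hδc p _ hJle
      rw [HahnSeries.coeff_sub, sub_eq_zero] at hz
      rw [hz, ih hple]
  have hmem0 : ∀ n : ℕ, J (n + 1) ∈ (A 0).support := by
    intro n
    have h1 : J (n + 1) ∈ (A (n + 1)).support := hJs (n + 1)
    rw [HahnSeries.mem_support] at h1 ⊢
    rw [← tele n (n + 1) le_rfl]
    exact h1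
  have hanti2 : StrictAnti (fun n : ℕ => J (n + 1)) := fun a b h => hJanti (Nat.succ_lt_succ h)
  exact Set.isWF_iff_no_descending_seq.mp (A 0).isWF_support _ hanti2 (fun n => hmem0 n)

end HCAux

open HCAux

/-- Let `(Γ, ψ)`, `Γ := H[I,k]`, be an H-couple over `k` of Hahn type, and let
`S ⊆ Γ` be well-ordered.  Then the set of all `α + ψ(e_i)` with `α ∈ S` and `i` in the support
of `α` is a well-ordered subset of `Γ`. -/
theorem wellOrdered_image_of_wellOrdered (ψ : HahnSeries I k → HahnSeries I k)
    (hψ : IsHCoupleHahnType ψ)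
    (S : Set (HahnSeries I k)) (hS : S.WellFoundedOn (fun a b => HahnLt a b)) :
    {γ : HahnSeries I k | ∃ α ∈ S, ∃ i ∈ α.support,
      γ = α + ψ (HahnSeries.single i 1)}.WellFoundedOn (fun a b => HahnLt a b) := by
  have hSW : S.IsWF := hS
  suffices h : Set.IsWF {γ : HahnSeries I k | ∃ α ∈ S, ∃ i ∈ α.support,
      γ = α + ψ (HahnSeries.single i 1)} from h
  rw [Set.isWF_iff_no_descending_seq]
  intro f hf hfm
  have hfm' : ∀ n : ℕ, f n ∈ {γ : HahnSeries I k | ∃ α ∈ S, ∃ i ∈ α.support,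
      γ = α + ψ (HahnSeries.single i 1)} := fun n => hfm n
  choose α hαS i hi hfe using hfm'
  obtain ⟨g, hg⟩ := hSW.isPWO.exists_monotone_subseq (f := α) hαS
  exact no_descending hψ (fun n => α (g n)) (fun n => f (g n)) (fun n => i (g n))
    (hf.comp_strictMono g.strictMono) (fun a b hab => hg hab)
    (fun n => hfe (g n)) (fun n => hi (g n))
end

section
/- Let k be an ordered field, (Γ, ψ) an H-couple over k, and Γ₁ an ordered vector space over k containing Γ as an ordered k-subspace such that every nonzero element of Γ₁ has the same k-archimedean class as some nonzero element of Γ (i.e., [Γ]_k = [Γ₁]_k). Then there is a unique map ψ₁ : Γ₁ \ {0} → Γ₁ extending ψ such that (Γ₁, ψ₁) is an H-couple over k. If moreover (Γ, ψ) is of Hahn type and Γ₁ is a Hahn space over k, then (Γ₁, ψ₁) is of Hahn type. -/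
section
variable (k : Type*) [Field k] [LinearOrder k] [IsStrictOrderedRing k] {Γ : Type*} [AddCommGroup Γ] [LinearOrder Γ] [IsOrderedAddMonoid Γ]
  [Module k Γ]

/-- `(G, ψ)` is an *H-couple over `k`* (with `G` a set of elements of an ambient ordered
`k`-vector space):  `ψ` maps nonzero elements of `G` into `G` and satisfies, for all nonzero
`α, β ∈ G`:  (A1) `ψ(α+β) ≥ min (ψ α) (ψ β)` if `α + β ≠ 0`;  (A2) `ψ(nα) = ψ(α)` for all
nonzero integers `n`;  (A3) `α + ψ(α) > ψ(β)` if `α > 0`;  moreover `ψ(cα) = ψ(α)` for nonzero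
`c ∈ k`, and `ψ(α) ≥ ψ(β)` whenever `0 < α ≤ β`. -/
def IsHCoupleOn (G : Set Γ) (ψ : Γ → Γ) : Prop :=
  (∀ α ∈ G, α ≠ 0 → ψ α ∈ G) ∧
  (∀ α ∈ G, ∀ β ∈ G, α ≠ 0 → β ≠ 0 → α + β ≠ 0 → min (ψ α) (ψ β) ≤ ψ (α + β)) ∧
  (∀ α ∈ G, ∀ n : ℤ, α ≠ 0 → n ≠ 0 → ψ (n • α) = ψ α) ∧
  (∀ α ∈ G, ∀ β ∈ G, β ≠ 0 → 0 < α → ψ β < α + ψ α) ∧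
  (∀ α ∈ G, ∀ c : k, α ≠ 0 → c ≠ 0 → ψ (c • α) = ψ α) ∧
  (∀ α ∈ G, ∀ β ∈ G, 0 < α → α ≤ β → ψ β ≤ ψ α)

/-- `[α]_k ≤ [β]_k`:  comparison of `k`-archimedean classes. -/
def ClsLE (α β : Γ) : Prop := ∃ c : k, 0 < c ∧ |α| ≤ c • |β|

/-- `(G, ψ)` is of *Hahn type*: for all nonzero `α, β ∈ G` with `ψ(α) = ψ(β)` there is a nonzero
`c ∈ k` with `α - cβ = 0` or `ψ(α - cβ) > ψ(α)`. -/
def IsHahnTypeOn (G : Set Γ) (ψ : Γ → Γ) : Prop :=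
  ∀ α ∈ G, ∀ β ∈ G, α ≠ 0 → β ≠ 0 → ψ α = ψ β →
    ∃ c : k, c ≠ 0 ∧ (α - c • β = 0 ∨ ψ α < ψ (α - c • β))

/-- `G` is a *Hahn space over `k`*: for all nonzero `α, β ∈ G` with the same `k`-archimedean
class there is `c ∈ k` with `α - cβ = 0` or `[α - cβ]_k < [α]_k`. -/
def IsHahnSpaceOn (G : Set Γ) : Prop :=
  ∀ α ∈ G, ∀ β ∈ G, α ≠ 0 → β ≠ 0 → ClsLE k α β → ClsLE k β α →
    ∃ c : k, α - c • β = 0 ∨ ¬ ClsLE k α (α - c • β)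

end

section Aux
variable {k : Type*} [Field k] [LinearOrder k] [IsStrictOrderedRing k] {Γ₁ : Type*} [AddCommGroup Γ₁] [LinearOrder Γ₁] [IsOrderedAddMonoid Γ₁]
  [Module k Γ₁]
variable (hsmul : ∀ (c : k) (x : Γ₁), 0 < c → 0 < x → 0 < c • x)
include hsmul

lemma aux_smul_lt {c : k} {x y : Γ₁} (hc : 0 < c) (h : x < y) : c • x < c • y := by
  have := hsmul c (y - x) hc (sub_pos.2 h)
  rw [smul_sub] at this
  exact sub_pos.1 this

lemma aux_smul_le {c : k} {x y : Γ₁} (hc : 0 < c) (h : x ≤ y) : c • x ≤ c • y := by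
  rcases h.eq_or_lt with rfl | h
  · exact le_rfl
  · exact (aux_smul_lt hsmul hc h).le

lemma aux_smul_nonneg {c : k} {x : Γ₁} (hc : 0 < c) (hx : 0 ≤ x) : 0 ≤ c • x := by
  simpa using aux_smul_le hsmul hc hx

lemma aux_abs_smul_pos {c : k} (x : Γ₁) (hc : 0 < c) : |c • x| = c • |x| := by
  rcases le_total 0 x with hx | hx
  · rw [abs_of_nonneg hx, abs_of_nonneg (aux_smul_nonneg hsmul hc hx)]
  · have h1 : 0 ≤ c • (-x) := aux_smul_nonneg hsmul hc (neg_nonneg.2 hx)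
    rw [smul_neg] at h1
    rw [abs_of_nonpos hx, abs_of_nonpos (neg_nonneg.1 h1), smul_neg]

lemma aux_abs_smul {c : k} (x : Γ₁) (hc : c ≠ 0) : |c • x| = |c| • |x| := by
  rcases hc.lt_or_gt with h | h
  · have : |c • x| = |(-c) • x| := by rw [neg_smul, abs_neg]
    rw [this, aux_abs_smul_pos hsmul x (neg_pos.2 h), abs_of_neg h]
  · rw [aux_abs_smul_pos hsmul x h, abs_of_pos h]

omit hsmul in
lemma aux_clsle_refl (x : Γ₁) : ClsLE k x x := ⟨1, one_pos, by simp⟩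

lemma aux_clsle_trans {x y z : Γ₁} (h1 : ClsLE k x y) (h2 : ClsLE k y z) : ClsLE k x z := by
  obtain ⟨c, hc, h1⟩ := h1
  obtain ⟨d, hd, h2⟩ := h2
  exact ⟨c * d, mul_pos hc hd, by
    rw [mul_smul]; exact h1.trans (aux_smul_le hsmul hc h2)⟩

lemma aux_clsle_smul_left {c : k} (x : Γ₁) (hc : c ≠ 0) : ClsLE k (c • x) x :=
  ⟨|c|, abs_pos.2 hc, (aux_abs_smul hsmul x hc).le⟩

lemma aux_clsle_smul_right {c : k} (x : Γ₁) (hc : c ≠ 0) : ClsLE k x (c • x) := by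
  refine ⟨|c|⁻¹, inv_pos.2 (abs_pos.2 hc), ?_⟩
  rw [aux_abs_smul hsmul x hc, smul_smul, inv_mul_cancel₀ (abs_ne_zero.2 hc), one_smul]

lemma aux_clsle_add {x y z : Γ₁} (h1 : ClsLE k x z) (h2 : ClsLE k y z) :
    ClsLE k (x + y) z := by
  obtain ⟨c, hc, h1⟩ := h1
  obtain ⟨d, hd, h2⟩ := h2
  refine ⟨c + d, by positivity, ?_⟩
  rw [add_smul]
  exact (abs_add_le x y).trans (add_le_add h1 h2)

omit hsmul in
lemma aux_abs_mem {G : Submodule k Γ₁} {a : Γ₁} (ha : a ∈ G) : |a| ∈ G := by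
  rcases abs_choice a with h | h
  · rw [h]; exact ha
  · rw [h]; exact neg_mem ha

section Psi
variable {G : Set Γ₁} {ψ : Γ₁ → Γ₁}
variable (habs : ∀ a ∈ G, |a| ∈ G) (hsmem : ∀ (c : k), ∀ a ∈ G, c • a ∈ G)
variable (hψ : IsHCoupleOn k G ψ)

include hψ in
lemma aux_psi_abs {a : Γ₁} (ha : a ∈ G) (h0 : a ≠ 0) : ψ |a| = ψ a := by
  rcases le_total 0 a with h | h
  · rw [abs_of_nonneg h]
  · rw [abs_of_nonpos h]
    have := hψ.2.2.1 a ha (-1) h0 (by norm_num)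
    simpa using this

include hsmul habs hsmem hψ in
lemma aux_psi_cls_le {a b : Γ₁} (ha : a ∈ G) (hb : b ∈ G) (h0 : a ≠ 0) (h0' : b ≠ 0)
    (h : ClsLE k a b) : ψ b ≤ ψ a := by
  obtain ⟨c, hc, hle⟩ := h
  have h1 : ψ (c • |b|) ≤ ψ |a| :=
    hψ.2.2.2.2.2 |a| (habs a ha) (c • |b|) (hsmem c |b| (habs b hb)) (abs_pos.2 h0) hle
  rw [aux_psi_abs (k := k) hsmul hψ ha h0] at h1
  rw [hψ.2.2.2.2.1 |b| (habs b hb) c (abs_ne_zero.2 h0') hc.ne',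
    aux_psi_abs (k := k) hsmul hψ hb h0'] at h1
  exact h1

include hsmul habs hsmem hψ in
lemma aux_psi_cls_eq {a b : Γ₁} (ha : a ∈ G) (hb : b ∈ G) (h0 : a ≠ 0) (h0' : b ≠ 0)
    (h : ClsLE k a b) (h' : ClsLE k b a) : ψ a = ψ b :=
  le_antisymm (aux_psi_cls_le hsmul habs hsmem hψ hb ha h0' h0 h')
    (aux_psi_cls_le hsmul habs hsmem hψ ha hb h0 h0' h)

include hsmul habs hsmem hψ in
lemma aux_psi_strict (hsub : ∀ a ∈ G, ∀ b ∈ G, a - b ∈ G)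
    (hHT : IsHahnTypeOn k G ψ) {a b : Γ₁} (ha : a ∈ G) (hb : b ∈ G)
    (h0 : a ≠ 0) (h0' : b ≠ 0) (hab : ClsLE k a b) (hnba : ¬ ClsLE k b a) :
    ψ b < ψ a := by
  rcases lt_or_ge (ψ b) (ψ a) with h | h
  · exact h
  have heq : ψ a = ψ b :=
    le_antisymm h (aux_psi_cls_le hsmul habs hsmem hψ ha hb h0 h0' hab)
  exfalso
  obtain ⟨c, hc0, hcase⟩ := hHT a ha b hb h0 h0' heq
  by_cases hz : a - c • b = 0
  · apply hnba
    have hacb : a = c • b := sub_eq_zero.1 hz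
    rw [hacb]
    exact aux_clsle_smul_right hsmul b hc0
  · have hmem : a - c • b ∈ G := hsub a ha (c • b) (hsmem c b hb)
    have h1 : ClsLE k (a - c • b) b := by
      have := aux_clsle_add hsmul hab (aux_clsle_smul_left hsmul (x := b) (c := -c)
        (neg_ne_zero.2 hc0))
      simpa [sub_eq_add_neg, neg_smul] using this
    have hcpos : (0:k) < |c| := abs_pos.2 hc0
    have key : ∀ e : k, 0 < e → e • |a| < |b| := by
      intro e he
      by_contra hcon
      push_neg at hcon
      exact hnba ⟨e, he, hcon⟩
    have hmul1 : (|c|/2) * (2/|c|) = 1 := by field_simp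
    have hmul2 : (2/|c|) * (|c|/2) = 1 := by field_simp
    have hlt1 : |a| < (|c|/2) • |b| := by
      have hk := key (2/|c|) (by positivity)
      calc |a| = (|c|/2) • ((2/|c|) • |a|) := by rw [smul_smul, hmul1, one_smul]
        _ < (|c|/2) • |b| := aux_smul_lt hsmul (by positivity) hk
    have h3 : |c| • |b| - |a| ≤ |a - c • b| := by
      calc |c| • |b| - |a| = |c • b| - |a| := by rw [aux_abs_smul hsmul b hc0]
        _ ≤ |c • b - a| := abs_sub_abs_le_abs_sub _ _
        _ = |a - c • b| := abs_sub_comm _ _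
    have h4 : (|c|/2) • |b| < |a - c • b| := by
      have : |c| • |b| - (|c|/2) • |b| = (|c|/2) • |b| := by
        rw [← sub_smul]
        congr 1
        ring
      calc (|c|/2) • |b| = |c| • |b| - (|c|/2) • |b| := this.symm
        _ < |c| • |b| - |a| := by exact sub_lt_sub_left hlt1 _
        _ ≤ |a - c • b| := h3
    have h2 : ClsLE k b (a - c • b) := by
      refine ⟨2/|c|, by positivity, ?_⟩
      calc |b| = (2/|c|) • ((|c|/2) • |b|) := by rw [smul_smul, hmul2, one_smul]
        _ ≤ (2/|c|) • |a - c • b| := aux_smul_le hsmul (by positivity) h4.le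
    have hpsieq := aux_psi_cls_eq hsmul habs hsmem hψ hmem hb hz h0' h1 h2
    rcases hcase with hh | hlt
    · exact hz hh
    · rw [hpsieq, ← heq] at hlt
      exact lt_irrefl _ hlt

end Psi
end Aux

/-- Let `k` be an ordered field, `(Γ, ψ)` an H-couple over `k`, and `Γ₁` an
ordered `k`-vector space extending `Γ` with `[Γ]_k = [Γ₁]_k`.  Then there is a unique map `ψ₁`
on `Γ₁ \ {0}` extending `ψ` such that `(Γ₁, ψ₁)` is an H-couple over `k`; and if `(Γ, ψ)` is of
Hahn type and `Γ₁` is a Hahn space over `k`, then `(Γ₁, ψ₁)` is of Hahn type. -/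
theorem exists_unique_hcouple_extension {k : Type*} [Field k] [LinearOrder k] [IsStrictOrderedRing k]
    {Γ₁ : Type*} [AddCommGroup Γ₁] [LinearOrder Γ₁] [IsOrderedAddMonoid Γ₁] [Module k Γ₁]
    (hsmul : ∀ (c : k) (x : Γ₁), 0 < c → 0 < x → 0 < c • x)
    (G : Submodule k Γ₁) (ψ : Γ₁ → Γ₁)
    (hψ : IsHCoupleOn k (G : Set Γ₁) ψ)
    (hcls : ∀ x : Γ₁, x ≠ 0 → ∃ y ∈ G, y ≠ 0 ∧ ClsLE k x y ∧ ClsLE k y x) :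
    (∃ ψ₁ : Γ₁ → Γ₁,
      ((∀ x ∈ G, x ≠ 0 → ψ₁ x = ψ x) ∧ IsHCoupleOn k (Set.univ : Set Γ₁) ψ₁) ∧
      ∀ ψ₁' : Γ₁ → Γ₁,
        ((∀ x ∈ G, x ≠ 0 → ψ₁' x = ψ x) ∧ IsHCoupleOn k (Set.univ : Set Γ₁) ψ₁') →
        ∀ x : Γ₁, x ≠ 0 → ψ₁' x = ψ₁ x) ∧
    (IsHahnTypeOn k (G : Set Γ₁) ψ → IsHahnSpaceOn k (Set.univ : Set Γ₁) →
      ∀ ψ₁ : Γ₁ → Γ₁,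
        (∀ x ∈ G, x ≠ 0 → ψ₁ x = ψ x) → IsHCoupleOn k (Set.univ : Set Γ₁) ψ₁ →
        IsHahnTypeOn k (Set.univ : Set Γ₁) ψ₁) := by
  classical
  -- closure properties of G and univ
  have habsG : ∀ a ∈ (G : Set Γ₁), |a| ∈ (G : Set Γ₁) := fun a ha => aux_abs_mem ha
  have hsmemG : ∀ (c : k), ∀ a ∈ (G : Set Γ₁), c • a ∈ (G : Set Γ₁) :=
    fun c a ha => G.smul_mem c ha
  have hsubG : ∀ a ∈ (G : Set Γ₁), ∀ b ∈ (G : Set Γ₁), a - b ∈ (G : Set Γ₁) :=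
    fun a ha b hb => sub_mem ha hb
  have habsU : ∀ a ∈ (Set.univ : Set Γ₁), |a| ∈ (Set.univ : Set Γ₁) := fun _ _ => trivial
  have hsmemU : ∀ (c : k), ∀ a ∈ (Set.univ : Set Γ₁), c • a ∈ (Set.univ : Set Γ₁) :=
    fun _ _ _ => trivial
  -- representative function
  set rep : ∀ x : Γ₁, x ≠ 0 → Γ₁ := fun x hx => (hcls x hx).choose with hrep
  have hrepspec : ∀ (x : Γ₁) (hx : x ≠ 0),
      rep x hx ∈ G ∧ rep x hx ≠ 0 ∧ ClsLE k x (rep x hx) ∧ ClsLE k (rep x hx) x := by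
    intro x hx
    obtain ⟨hy, h0, h1, h2⟩ := (hcls x hx).choose_spec
    exact ⟨hy, h0, h1, h2⟩
  set ψ₁ : Γ₁ → Γ₁ := fun x => if h : x ≠ 0 then ψ (rep x h) else 0 with hψ₁def
  have hψ₁eq : ∀ (x : Γ₁) (hx : x ≠ 0), ψ₁ x = ψ (rep x hx) := by
    intro x hx; simp [hψ₁def, hx]
  -- ψ₁ x = ψ b for any representative b
  have hval : ∀ (x : Γ₁) (hx : x ≠ 0), ∀ b ∈ G, b ≠ 0 → ClsLE k x b → ClsLE k b x →
      ψ₁ x = ψ b := by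
    intro x hx b hb hb0 h1 h2
    obtain ⟨haG, ha0, hxa, hax⟩ := hrepspec x hx
    rw [hψ₁eq x hx]
    exact aux_psi_cls_eq hsmul habsG hsmemG hψ haG hb ha0 hb0
      (aux_clsle_trans hsmul hax h1) (aux_clsle_trans hsmul h2 hxa)
  -- extension property
  have hext : ∀ x ∈ G, x ≠ 0 → ψ₁ x = ψ x := by
    intro x hx h0
    exact hval x h0 x hx h0 (aux_clsle_refl x) (aux_clsle_refl x)
  -- class invariance of ψ₁
  have hinv : ∀ (x y : Γ₁), x ≠ 0 → y ≠ 0 → ClsLE k x y → ClsLE k y x → ψ₁ x = ψ₁ y := by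
    intro x y hx hy h1 h2
    obtain ⟨hbG, hb0, hyb, hby⟩ := hrepspec y hy
    rw [hψ₁eq y hy]
    exact hval x hx _ hbG hb0 (aux_clsle_trans hsmul h1 hyb) (aux_clsle_trans hsmul hby h2)
  -- class monotonicity of ψ₁
  have hmono : ∀ (x y : Γ₁), x ≠ 0 → y ≠ 0 → ClsLE k x y → ψ₁ y ≤ ψ₁ x := by
    intro x y hx hy h
    obtain ⟨haG, ha0, hxa, hax⟩ := hrepspec x hx
    obtain ⟨hbG, hb0, hyb, hby⟩ := hrepspec y hy
    rw [hψ₁eq x hx, hψ₁eq y hy]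
    exact aux_psi_cls_le hsmul habsG hsmemG hψ haG hbG ha0 hb0
      (aux_clsle_trans hsmul (aux_clsle_trans hsmul hax h) hyb)
  -- ψ₁ is an H-couple on univ
  have hHC : IsHCoupleOn k (Set.univ : Set Γ₁) ψ₁ := by
    refine ⟨fun _ _ _ => trivial, ?_, ?_, ?_, ?_, ?_⟩
    · -- A1
      intro α _ β _ hα hβ hαβ
      rcases le_total |α| |β| with h | h
      · have h1 : ClsLE k α β := ⟨1, one_pos, by simpa using h⟩
        have h2 : ClsLE k (α + β) β :=
          aux_clsle_add hsmul h1 (aux_clsle_refl β)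
        exact le_trans (min_le_right _ _) (hmono _ _ hαβ hβ h2)
      · have h1 : ClsLE k β α := ⟨1, one_pos, by simpa using h⟩
        have h2 : ClsLE k (α + β) α :=
          aux_clsle_add hsmul (aux_clsle_refl α) h1
        exact le_trans (min_le_left _ _) (hmono _ _ hαβ hα h2)
    · -- A2
      intro α _ n hα hn
      have hnk : ((n : k)) ≠ 0 := Int.cast_ne_zero.2 hn
      have heq : (n : ℤ) • α = ((n : k)) • α := (Int.cast_smul_eq_zsmul k n α).symm
      have hne : (n : ℤ) • α ≠ 0 := by
        rw [heq]; exact smul_ne_zero hnk hα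
      rw [heq]
      exact hinv _ _ (by rw [← heq]; exact hne) hα
        (aux_clsle_smul_left hsmul α hnk) (aux_clsle_smul_right hsmul α hnk)
    · -- A3
      intro α _ β _ hβ hα
      have hα0 : α ≠ 0 := ne_of_gt hα
      obtain ⟨haG, ha0, hαa, haα⟩ := hrepspec α hα0
      obtain ⟨c, hc, hle⟩ := haα
      have habs : |α| = α := abs_of_pos hα
      set γ : Γ₁ := c⁻¹ • |rep α hα0| with hγdef
      have hγG : γ ∈ G := G.smul_mem _ (aux_abs_mem haG)
      have hγpos : 0 < γ := hsmul _ _ (inv_pos.2 hc) (abs_pos.2 ha0)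
      have hle' : |rep α hα0| ≤ c • α := by rw [habs] at hle; exact hle
      have hγle : γ ≤ α := by
        rw [hγdef]
        calc c⁻¹ • |rep α hα0| ≤ c⁻¹ • (c • α) := aux_smul_le hsmul (inv_pos.2 hc) hle'
          _ = α := by rw [smul_smul, inv_mul_cancel₀ hc.ne', one_smul]
      obtain ⟨hbG, hb0, hβb, hbβ⟩ := hrepspec β hβ
      have hA3 := hψ.2.2.2.1 γ hγG (rep β hβ) hbG hb0 hγpos
      have hψγ : ψ γ = ψ (rep α hα0) := by
        rw [hγdef, hψ.2.2.2.2.1 _ (aux_abs_mem haG) c⁻¹ (abs_ne_zero.2 ha0)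
          (inv_ne_zero hc.ne'), aux_psi_abs (k := k) hsmul hψ haG ha0]
      rw [hψγ] at hA3
      rw [hψ₁eq α hα0, hψ₁eq β hβ]
      calc ψ (rep β hβ) < γ + ψ (rep α hα0) := hA3
        _ ≤ α + ψ (rep α hα0) := add_le_add_left hγle _
    · -- k-scaling
      intro α _ c hα hc
      exact hinv _ _ (smul_ne_zero hc hα) hα
        (aux_clsle_smul_left hsmul α hc) (aux_clsle_smul_right hsmul α hc)
    · -- monotone
      intro α _ β _ hα hle
      have hβ : 0 < β := lt_of_lt_of_le hα hle
      exact hmono α β hα.ne' hβ.ne' ⟨1, one_pos, by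
        rw [abs_of_pos hα, abs_of_pos hβ, one_smul]; exact hle⟩
  constructor
  · refine ⟨ψ₁, ⟨hext, hHC⟩, ?_⟩
    -- uniqueness
    intro ψ₁' ⟨hext', hHC'⟩ x hx
    obtain ⟨haG, ha0, hxa, hax⟩ := hrepspec x hx
    have := aux_psi_cls_eq hsmul habsU hsmemU hHC' (Set.mem_univ x) (Set.mem_univ _)
      hx ha0 hxa hax
    rw [this, hext' _ haG ha0, hψ₁eq x hx]
  · -- Hahn type part
    intro hHT hHS ψ₁' hext' hHC' α _ β _ hα hβ heq
    -- ψ₁' agrees with ψ on representatives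
    have hval' : ∀ (x : Γ₁) (hx : x ≠ 0), ψ₁' x = ψ (rep x hx) := by
      intro x hx
      obtain ⟨haG, ha0, hxa, hax⟩ := hrepspec x hx
      rw [aux_psi_cls_eq hsmul habsU hsmemU hHC' (Set.mem_univ x) (Set.mem_univ _)
        hx ha0 hxa hax, hext' _ haG ha0]
    -- strict decrease of ψ₁' across classes
    have hstrict : ∀ (x y : Γ₁), x ≠ 0 → y ≠ 0 → ClsLE k x y → ¬ ClsLE k y x →
        ψ₁' y < ψ₁' x := by
      intro x y hx hy h1 h2
      obtain ⟨haG, ha0, hxa, hax⟩ := hrepspec x hx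
      obtain ⟨hbG, hb0, hyb, hby⟩ := hrepspec y hy
      rw [hval' x hx, hval' y hy]
      refine aux_psi_strict hsmul habsG hsmemG hψ hsubG hHT haG hbG ha0 hb0
        (aux_clsle_trans hsmul (aux_clsle_trans hsmul hax h1) hyb) ?_
      intro hcon
      exact h2 (aux_clsle_trans hsmul (aux_clsle_trans hsmul hyb hcon) hax)
    -- same class of α and β
    have hcls_eq : ClsLE k α β ∧ ClsLE k β α := by
      obtain ⟨haG, ha0, hαa, haα⟩ := hrepspec α hα
      obtain ⟨hbG, hb0, hβb, hbβ⟩ := hrepspec β hβ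
      have hψab : ψ (rep α hα) = ψ (rep β hβ) := by
        rw [← hval' α hα, ← hval' β hβ]; exact heq
      rcases le_total |α| |β| with h | h
      · have h1 : ClsLE k α β := ⟨1, one_pos, by simpa using h⟩
        refine ⟨h1, ?_⟩
        by_contra h2
        have : ψ (rep β hβ) < ψ (rep α hα) :=
          aux_psi_strict hsmul habsG hsmemG hψ hsubG hHT haG hbG ha0 hb0
            (aux_clsle_trans hsmul (aux_clsle_trans hsmul haα h1) hβb)
            (fun hcon => h2 (aux_clsle_trans hsmul (aux_clsle_trans hsmul hβb hcon) haα))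
        rw [hψab] at this; exact lt_irrefl _ this
      · have h1 : ClsLE k β α := ⟨1, one_pos, by simpa using h⟩
        refine ⟨?_, h1⟩
        by_contra h2
        have : ψ (rep α hα) < ψ (rep β hβ) :=
          aux_psi_strict hsmul habsG hsmemG hψ hsubG hHT hbG haG hb0 ha0
            (aux_clsle_trans hsmul (aux_clsle_trans hsmul hbβ h1) hαa)
            (fun hcon => h2 (aux_clsle_trans hsmul (aux_clsle_trans hsmul hαa hcon) hbβ))
        rw [hψab] at this; exact lt_irrefl _ this
    obtain ⟨h1, h2⟩ := hcls_eq
    obtain ⟨c, hcase⟩ := hHS α trivial β trivial hα hβ h1 h2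
    have hc0 : c ≠ 0 := by
      rintro rfl
      rcases hcase with hh | hh
      · simp at hh; exact hα hh
      · simp at hh; exact hh (aux_clsle_refl α)
    refine ⟨c, hc0, ?_⟩
    by_cases hz : α - c • β = 0
    · exact Or.inl hz
    · rcases hcase with hh | hh
      · exact Or.inl hh
      · right
        have hd1 : ClsLE k (α - c • β) α := by
          have := aux_clsle_add hsmul (aux_clsle_refl α)
            (aux_clsle_trans hsmul (aux_clsle_smul_left hsmul (x := β) (c := -c)
              (neg_ne_zero.2 hc0)) h2)
          simpa [sub_eq_add_neg, neg_smul] using this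
        exact hstrict (α - c • β) α hz hα hd1 hh
end
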